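/- arXiv:2111.06194 — 4 statements merged into one kernel-verified Lean document; each statement's English description precedes it below -/
import Mathlib

section
/- Assume ν is a proper lower semi-continuous function with ν(s̄) ∈ ℝ and s̄ ∈ dom ∂ν. Let r > 0 and assume g is a smooth mapping from ℝⁿ to Y. Then (x̄, ȳ) is a solution of the problem: minimize f(x) subject to g(x) + s̄ = y, y ∈ K, if and only if there exists λ̄ ∈ Y such that: (1) (x̄, ȳ) ∈ argmin{l_r(x,y,λ̄) : x ∈ ℝⁿ, y ∈ K}; (2) Dg(x̄)*(g(x̄) − ȳ) = 0; (3) Π_K(g(x̄)) = ȳ. -/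
open Set Filter Topology Bornology Metric
open scoped RealInnerProductSpace

noncomputable section

variable {E : Type*} [NormedAddCommGroup E] [InnerProductSpace ℝ E]
variable {Y : Type*} [NormedAddCommGroup Y] [InnerProductSpace ℝ Y]

/-- The set of feasible shifts `S = {s | ∃ x, g x + s ∈ K}`. -/
def feasShifts (g : E → Y) (K : Set Y) : Set Y := {s | ∃ x, g x + s ∈ K}

/-- The graph of the set-valued mapping `G_K(x) = -g(x) + K`,
i.e. `{(x, y) | g x + y ∈ K}`. -/
def gphGK (g : E → Y) (K : Set Y) : Set (E × Y) := {p | g p.1 + p.2 ∈ K}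

/-- Recession cone of a convex set. -/
def recCone {Z : Type*} [AddCommGroup Z] [Module ℝ Z] (C : Set Z) : Set Z :=
  {d | ∀ z ∈ C, ∀ t : ℝ, 0 ≤ t → z + t • d ∈ C}

/-- Horizon (recession) function of a finite-valued function `f`. -/
def horizonFn (f : E → ℝ) (h : E) : EReal :=
  ⨆ t : {t : ℝ // 0 < t}, (((f ((t : ℝ) • h) - f 0) / (t : ℝ) : ℝ) : EReal)

/-- The optimal value function `ν(s) = inf {f x : g x + s ∈ K}` of the shifted problem. -/
def valFn (f : E → ℝ) (g : E → Y) (K : Set Y) (s : Y) : EReal :=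
  sInf ((fun x => (f x : EReal)) '' {x | g x + s ∈ K})

/-- The solution set `X(s)` of the shifted problem. -/
def solSet (f : E → ℝ) (g : E → Y) (K : Set Y) (s : Y) : Set E :=
  {x | g x + s ∈ K ∧ ∀ x', g x' + s ∈ K → f x ≤ f x'}

/-- The Lagrangian `l(x,y,λ) = f x + ⟨λ, g x - y⟩`. -/
def lagr (f : E → ℝ) (g : E → Y) (x : E) (y : Y) (l : Y) : ℝ :=
  f x + ⟪l, g x - y⟫

/-- The augmented Lagrangian `l_r(x,y,λ) = f x + ⟨λ, g x - y⟩ + (r/2)‖g x - y‖²`. -/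
def auglagr (f : E → ℝ) (g : E → Y) (r : ℝ) (x : E) (y : Y) (l : Y) : ℝ :=
  f x + ⟪l, g x - y⟫ + r / 2 * ‖g x - y‖ ^ 2

/-- The dual function `θ(λ) = - inf {l(x,y,λ) : x ∈ ℝⁿ, y ∈ K}`. -/
def dualFn (f : E → ℝ) (g : E → Y) (K : Set Y) (l : Y) : EReal :=
  - sInf ((fun p : E × Y => ((lagr f g p.1 p.2 l : ℝ) : EReal)) '' {p | p.2 ∈ K})

/-- Fenchel conjugate of an extended-real-valued function. -/
def econj (h : Y → EReal) (l : Y) : EReal := ⨆ s : Y, (⟪l, s⟫ : EReal) - h s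

/-- Convex subdifferential of an extended-real-valued function. -/
def esubdiff (h : Y → EReal) (s : Y) : Set Y :=
  {l | ∀ s', h s + (⟪l, s' - s⟫ : EReal) ≤ h s'}

/-- Convexity of an extended-real-valued function, via its epigraph. -/
def ERealConvexOn (h : Y → EReal) : Prop :=
  Convex ℝ {p : Y × ℝ | h p.1 ≤ (p.2 : EReal)}

/-- Properness of an extended-real-valued function. -/
def ERealProper (h : Y → EReal) : Prop := (∀ s, h s ≠ ⊥) ∧ ∃ s, h s ≠ ⊤

/-- The optimal value `val(D(s)) = sup_λ [⟨s,λ⟩ - θ(λ)]` of the dual problem `D(s)`. -/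
def dualVal (f : E → ℝ) (g : E → Y) (K : Set Y) (s : Y) : EReal :=
  ⨆ l : Y, (⟪s, l⟫ : EReal) - dualFn f g K l

/-- The solution set `Sol(D(s))` of the dual problem `D(s)`. -/
def dualSol (f : E → ℝ) (g : E → Y) (K : Set Y) (s : Y) : Set Y :=
  {l | ∀ l', (⟪s, l'⟫ : EReal) - dualFn f g K l' ≤ (⟪s, l⟫ : EReal) - dualFn f g K l}

/-- The set of proximal points `argmin_{λ'} [h(λ') + ‖λ' - λ‖²/(2r)]`. -/
def proxSet (h : Y → EReal) (r : ℝ) (l : Y) : Set Y :=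
  {m | ∀ m', h m + ((‖m - l‖ ^ 2 / (2 * r) : ℝ) : EReal) ≤
      h m' + ((‖m' - l‖ ^ 2 / (2 * r) : ℝ) : EReal)}

/-- The Moreau–Yosida regularization `h_r(λ) = inf_{λ'} [h(λ') + ‖λ' - λ‖²/(2r)]`. -/
def moreau (h : Y → EReal) (r : ℝ) (l : Y) : EReal :=
  ⨅ m : Y, (h m + ((‖m - l‖ ^ 2 / (2 * r) : ℝ) : EReal))

private lemma aux_nonneg' {a b : ℝ} (h : ∀ t : ℝ, t ∈ Set.Ioc (0:ℝ) 1 → 0 ≤ a + t * b) :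
    0 ≤ a := by
  have hten : Filter.Tendsto (fun t : ℝ => a + t * b) (𝓝[>] (0:ℝ)) (𝓝 (a + 0 * b)) :=
    ((continuous_const.add (continuous_id.mul continuous_const)).tendsto 0).mono_left
      nhdsWithin_le_nhds
  rw [zero_mul, add_zero] at hten
  refine ge_of_tendsto hten ?_
  filter_upwards [Ioc_mem_nhdsGT_of_mem (Set.left_mem_Ico.2 one_pos)] with t ht
  exact h t ht

private lemma deriv_nonneg_of_right_min {φ : ℝ → ℝ} {c : ℝ} (hd : HasDerivAt φ c 0)
    (hmin : ∀ t : ℝ, t ∈ Set.Ioc (0:ℝ) 1 → φ 0 ≤ φ t) : 0 ≤ c := by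
  have h1 := hasDerivAt_iff_tendsto_slope.1 hd
  have h2 : Filter.Tendsto (slope φ 0) (𝓝[>] (0:ℝ)) (𝓝 c) :=
    h1.mono_left (nhdsWithin_mono _ fun x hx => (Set.mem_compl_singleton_iff).2 (ne_of_gt hx))
  refine ge_of_tendsto h2 ?_
  filter_upwards [Ioc_mem_nhdsGT_of_mem (Set.left_mem_Ico.2 one_pos)] with t ht
  have hs : slope φ 0 t = (φ t - φ 0) / t := by rw [slope_def_field, sub_zero]
  rw [hs]
  exact div_nonneg (sub_nonneg.2 (hmin t ht)) ht.1.le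

private lemma proj_char' {Y : Type*} [NormedAddCommGroup Y] [InnerProductSpace ℝ Y]
    {K : Set Y} (hK : Convex ℝ K) {z yb : Y} (hyb : yb ∈ K)
    (hmin : ∀ y ∈ K, ‖z - yb‖ ≤ ‖z - y‖) : ∀ y ∈ K, ⟪z - yb, y - yb⟫ ≤ 0 := by
  intro y hy
  have key : 0 ≤ -(2 * ⟪z - yb, y - yb⟫) := by
    refine aux_nonneg' (b := ‖y - yb‖ ^ 2) ?_
    intro t ht
    have hyt : (1 - t) • yb + t • y ∈ K := hK hyb hy (by linarith [ht.2]) ht.1.le (by ring)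
    have h1 : ‖z - yb‖ ≤ ‖z - ((1 - t) • yb + t • y)‖ := hmin _ hyt
    have h2 : z - ((1 - t) • yb + t • y) = (z - yb) - t • (y - yb) := by module
    rw [h2] at h1
    have h3 : ‖(z - yb) - t • (y - yb)‖ ^ 2
        = ‖z - yb‖ ^ 2 - 2 * (t * ⟪z - yb, y - yb⟫) + t ^ 2 * ‖y - yb‖ ^ 2 := by
      rw [norm_sub_sq_real, real_inner_smul_right, norm_smul]
      simp only [Real.norm_eq_abs, mul_pow, sq_abs]
    have h4 : ‖z - yb‖ ^ 2 ≤ ‖(z - yb) - t • (y - yb)‖ ^ 2 :=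
      pow_le_pow_left₀ (norm_nonneg _) h1 2
    have h5 : t * 0 ≤ t * (-(2 * ⟪z - yb, y - yb⟫) + t * ‖y - yb‖ ^ 2) := by nlinarith
    linarith [le_of_mul_le_mul_left h5 ht.1]
  linarith

/-- Theorem 4.1: optimality conditions in terms of the augmented
Lagrangian for the problem with the least constraint violation: `(x̄, ȳ)` solves
`min f(x) s.t. g(x) + s̄ = y, y ∈ K` iff there is `λ̄` with
`(x̄, ȳ) ∈ argmin l_r(·,·,λ̄)`, `Dg(x̄)*(g(x̄) - ȳ) = 0` and `Π_K(g(x̄)) = ȳ`. -/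
theorem optimality_via_auglagr {n : ℕ} {Y : Type*} [NormedAddCommGroup Y]
    [InnerProductSpace ℝ Y] [FiniteDimensional ℝ Y]
    (f : EuclideanSpace ℝ (Fin n) → ℝ) (g : EuclideanSpace ℝ (Fin n) → Y) (K : Set Y)
    (hfconv : ConvexOn ℝ Set.univ f) (hg : ContDiff ℝ (⊤ : ℕ∞) g)
    (hKne : K.Nonempty) (hKclosed : IsClosed K) (hKconv : Convex ℝ K)
    (hgraph : Convex ℝ (gphGK g K))
    (hSclosed : IsClosed (feasShifts g K))
    (sbar : Y) (hsbarS : sbar ∈ feasShifts g K)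
    (hsbarmin : ∀ s ∈ feasShifts g K, ‖sbar‖ ≤ ‖s‖)
    (hsbarne : sbar ≠ 0)
    (hproper : ERealProper (valFn f g K)) (hlsc : LowerSemicontinuous (valFn f g K))
    (hfin : ∃ v : ℝ, valFn f g K sbar = (v : EReal))
    (hsubdiff : (esubdiff (valFn f g K) sbar).Nonempty)
    (r : ℝ) (hr : 0 < r)
    (xbar : EuclideanSpace ℝ (Fin n)) (ybar : Y) :
    (ybar ∈ K ∧ g xbar + sbar = ybar ∧
      ∀ x y, y ∈ K → g x + sbar = y → f xbar ≤ f x) ↔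
    ∃ lbar : Y,
      (ybar ∈ K ∧ ∀ x y, y ∈ K →
        auglagr f g r xbar ybar lbar ≤ auglagr f g r x y lbar) ∧
      ContinuousLinearMap.adjoint (fderiv ℝ g xbar) (g xbar - ybar) = 0 ∧
      (ybar ∈ K ∧ ∀ y ∈ K, ‖g xbar - ybar‖ ≤ ‖g xbar - y‖) := by
  constructor
  · -- Forward direction
    rintro ⟨hyK, hfeas, hopt⟩
    obtain ⟨lbar, hl⟩ := hsubdiff
    have hgdiff : Differentiable ℝ g := hg.differentiable (by simp)
    have hcurve : ∀ (h : EuclideanSpace ℝ (Fin n)),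
        HasDerivAt (fun t : ℝ => g (xbar + t • h)) ((fderiv ℝ g xbar) h) 0 := by
      intro h
      have hc : HasDerivAt (fun t : ℝ => xbar + t • h) h 0 := by
        simpa using ((hasDerivAt_id (0:ℝ)).smul_const h).const_add xbar
      have hgd : HasFDerivAt g (fderiv ℝ g xbar) (xbar + (0:ℝ) • h) := by
        simpa using (hgdiff xbar).hasFDerivAt
      exact hgd.comp_hasDerivAt 0 hc
    have hxfeas : g xbar + sbar ∈ K := by rw [hfeas]; exact hyK
    have hval : valFn f g K sbar = ((f xbar : ℝ) : EReal) := by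
      apply le_antisymm
      · exact sInf_le ⟨xbar, hxfeas, rfl⟩
      · refine le_sInf ?_
        rintro b ⟨x, hx, rfl⟩
        exact EReal.coe_le_coe_iff.2 (hopt x _ hx rfl)
    have hlagr : ∀ (x) (y : Y), y ∈ K → f xbar + ⟪lbar, (y - g x) - sbar⟫ ≤ f x := by
      intro x y hy
      have h1 := hl (y - g x)
      have h2 : valFn f g K (y - g x) ≤ ((f x : ℝ) : EReal) := by
        refine sInf_le ⟨x, ?_, rfl⟩
        show g x + (y - g x) ∈ K
        have he : g x + (y - g x) = y := by abel
        rw [he]; exact hy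
      rw [hval] at h1
      have h3 : (((f xbar + ⟪lbar, (y - g x) - sbar⟫ : ℝ)) : EReal) ≤ ((f x : ℝ) : EReal) := by
        rw [EReal.coe_add]; exact le_trans h1 h2
      exact_mod_cast h3
    have hvs : g xbar - ybar = -sbar := by rw [← hfeas]; abel
    have hAv : ∀ h, ⟪g xbar - ybar, (fderiv ℝ g xbar) h⟫ = 0 := by
      intro h
      set w : ℝ → Y := fun t => g (xbar + t • h) - ybar with hw
      have hdw : HasDerivAt w ((fderiv ℝ g xbar) h) 0 := (hcurve h).sub_const ybar
      have hdq : HasDerivAt (fun t => ⟪w t, w t⟫)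
          (⟪w 0, (fderiv ℝ g xbar) h⟫ + ⟪(fderiv ℝ g xbar) h, w 0⟫) 0 :=
        HasDerivAt.inner ℝ hdw hdw
      have hw0 : w 0 = g xbar - ybar := by simp [hw]
      have hmin : IsLocalMin (fun t => ⟪w t, w t⟫) 0 := by
        apply Filter.Eventually.of_forall
        intro t
        have hmem : ybar - g (xbar + t • h) ∈ feasShifts g K := by
          refine ⟨xbar + t • h, ?_⟩
          show g (xbar + t • h) + (ybar - g (xbar + t • h)) ∈ K
          have he : g (xbar + t • h) + (ybar - g (xbar + t • h)) = ybar := by abel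
          rw [he]; exact hyK
        have h1 : ‖sbar‖ ≤ ‖w t‖ := by
          have h2 := hsbarmin _ hmem
          rwa [norm_sub_rev] at h2
        have h0 : ‖w 0‖ = ‖sbar‖ := by rw [hw0, hvs, norm_neg]
        show ⟪w 0, w 0⟫ ≤ ⟪w t, w t⟫
        rw [real_inner_self_eq_norm_sq, real_inner_self_eq_norm_sq, h0]
        exact pow_le_pow_left₀ (norm_nonneg _) h1 2
      have hz := hmin.hasDerivAt_eq_zero hdq
      rw [hw0] at hz
      have hcomm := real_inner_comm ((fderiv ℝ g xbar) h) (g xbar - ybar)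
      linarith
    have hadj : ContinuousLinearMap.adjoint (fderiv ℝ g xbar) (g xbar - ybar) = 0 := by
      have hzz : ⟪ContinuousLinearMap.adjoint (fderiv ℝ g xbar) (g xbar - ybar),
          ContinuousLinearMap.adjoint (fderiv ℝ g xbar) (g xbar - ybar)⟫ = 0 := by
        rw [ContinuousLinearMap.adjoint_inner_left]
        exact hAv _
      exact inner_self_eq_zero.1 hzz
    have hproj : ∀ y ∈ K, ‖g xbar - ybar‖ ≤ ‖g xbar - y‖ := by
      intro y hy
      have hmem : y - g xbar ∈ feasShifts g K := by
        refine ⟨xbar, ?_⟩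
        show g xbar + (y - g xbar) ∈ K
        have he : g xbar + (y - g xbar) = y := by abel
        rw [he]; exact hy
      have h2 := hsbarmin _ hmem
      rw [hvs, norm_neg]
      rwa [norm_sub_rev] at h2
    refine ⟨lbar, ⟨hyK, ?_⟩, hadj, hyK, hproj⟩
    intro x y hy
    have hL := hlagr x y hy
    have hnorm : ‖g xbar - ybar‖ ≤ ‖g x - y‖ := by
      have hmem : y - g x ∈ feasShifts g K := by
        refine ⟨x, ?_⟩
        show g x + (y - g x) ∈ K
        have he : g x + (y - g x) = y := by abel
        rw [he]; exact hy
      have h2 := hsbarmin _ hmem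
      rw [hvs, norm_neg]
      rwa [norm_sub_rev] at h2
    have e1 : ⟪lbar, (y - g x) - sbar⟫ = -⟪lbar, g x - y⟫ - ⟪lbar, sbar⟫ := by
      rw [inner_sub_right, ← neg_sub (g x) y, inner_neg_right]
    have e2 : ⟪lbar, g xbar - ybar⟫ = -⟪lbar, sbar⟫ := by rw [hvs, inner_neg_right]
    have hsq : ‖g xbar - ybar‖ ^ 2 ≤ ‖g x - y‖ ^ 2 := pow_le_pow_left₀ (norm_nonneg _) hnorm 2
    have hsq' : r / 2 * ‖g xbar - ybar‖ ^ 2 ≤ r / 2 * ‖g x - y‖ ^ 2 :=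
      mul_le_mul_of_nonneg_left hsq (by linarith)
    unfold auglagr
    rw [e2] at *
    rw [e1] at hL
    linarith
  · -- Backward direction
    rintro ⟨lbar, ⟨hyK, haug⟩, hadj, ⟨_, hproj⟩⟩
    obtain ⟨xstar, hxstar⟩ := hsbarS
    have hgdiff : Differentiable ℝ g := hg.differentiable (by simp)
    set sh : Y := ybar - g xbar with hsh
    have hvs : g xbar - ybar = -sh := by rw [hsh]; abel
    have hybeq : g xbar + sh = ybar := by rw [hsh]; abel
    have hshA : ∀ h, ⟪sh, (fderiv ℝ g xbar) h⟫ = 0 := by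
      intro h
      have h1 : ⟪ContinuousLinearMap.adjoint (fderiv ℝ g xbar) (g xbar - ybar), h⟫
          = ⟪g xbar - ybar, (fderiv ℝ g xbar) h⟫ :=
        ContinuousLinearMap.adjoint_inner_left _ _ _
      rw [hadj, inner_zero_left, hvs, inner_neg_left] at h1
      linarith
    have hchar : ∀ y ∈ K, ⟪g xbar - ybar, y - ybar⟫ ≤ 0 := proj_char' hKconv hyK hproj
    set h0 : EuclideanSpace ℝ (Fin n) := xstar - xbar with hh0
    have hcurve : HasDerivAt (fun t : ℝ => g (xbar + t • h0)) ((fderiv ℝ g xbar) h0) 0 := by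
      have hc : HasDerivAt (fun t : ℝ => xbar + t • h0) h0 0 := by
        simpa using ((hasDerivAt_id (0:ℝ)).smul_const h0).const_add xbar
      have hgd : HasFDerivAt g (fderiv ℝ g xbar) (xbar + (0:ℝ) • h0) := by
        simpa using (hgdiff xbar).hasFDerivAt
      exact hgd.comp_hasDerivAt 0 hc
    have hmem1 : (xbar, sh) ∈ gphGK g K := by
      show g xbar + sh ∈ K
      rw [hybeq]; exact hyK
    have hmem2 : (xstar, sbar) ∈ gphGK g K := hxstar
    have hderiv : HasDerivAt
        (fun t : ℝ => ⟪sh, g (xbar + t • h0)⟫ + t * ⟪sh, sbar - sh⟫) ⟪sh, sbar - sh⟫ 0 := by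
      have h1 := HasDerivAt.inner ℝ (hasDerivAt_const (0:ℝ) sh) hcurve
      rw [inner_zero_left, add_zero, hshA] at h1
      have h2 : HasDerivAt (fun t : ℝ => t * ⟪sh, sbar - sh⟫) ⟪sh, sbar - sh⟫ 0 := by
        simpa using (hasDerivAt_id (0:ℝ)).mul_const ⟪sh, sbar - sh⟫
      have h3 := h1.add h2
      rw [zero_add] at h3
      exact h3
    have hmono : ∀ t : ℝ, t ∈ Set.Ioc (0:ℝ) 1 →
        (fun t : ℝ => ⟪sh, g (xbar + t • h0)⟫ + t * ⟪sh, sbar - sh⟫) 0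
          ≤ (fun t : ℝ => ⟪sh, g (xbar + t • h0)⟫ + t * ⟪sh, sbar - sh⟫) t := by
      intro t ht
      have hc := hgraph hmem1 hmem2 (by linarith [ht.2] : (0:ℝ) ≤ 1 - t) ht.1.le (by ring)
      have hyK' : g (xbar + t • h0) + (sh + t • (sbar - sh)) ∈ K := by
        have hpair : (1 - t) • (xbar, sh) + t • (xstar, sbar)
            = (xbar + t • h0, sh + t • (sbar - sh)) := by
          rw [hh0]
          simp only [Prod.smul_mk, Prod.mk_add_mk, Prod.mk.injEq]
          exact ⟨by module, by module⟩
        have h6 := hc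
        rw [hpair] at h6
        exact h6
      have hle := hchar _ hyK'
      rw [hvs, inner_neg_left] at hle
      have hpt : (g (xbar + t • h0) + (sh + t • (sbar - sh))) - ybar
          = (g (xbar + t • h0) - g xbar) + t • (sbar - sh) := by
        rw [← hybeq]; abel
      rw [hpt, inner_add_right, real_inner_smul_right, inner_sub_right] at hle
      simp only [zero_smul, add_zero, zero_mul]
      linarith
    have h0le : 0 ≤ ⟪sh, sbar - sh⟫ := deriv_nonneg_of_right_min hderiv hmono
    have h1le : 0 ≤ 2 * ⟪sbar, sh - sbar⟫ := by
      refine aux_nonneg' (b := ‖sh - sbar‖ ^ 2) ?_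
      intro t ht
      have hc := hgraph hmem2 hmem1 (by linarith [ht.2] : (0:ℝ) ≤ 1 - t) ht.1.le (by ring)
      have hmem : sbar + t • (sh - sbar) ∈ feasShifts g K := by
        refine ⟨(1 - t) • xstar + t • xbar, ?_⟩
        have hpair : (1 - t) • (xstar, sbar) + t • (xbar, sh)
            = ((1 - t) • xstar + t • xbar, sbar + t • (sh - sbar)) := by
          simp only [Prod.smul_mk, Prod.mk_add_mk, Prod.mk.injEq]
          exact ⟨trivial, by module⟩
        have h6 := hc
        rw [hpair] at h6
        exact h6
      have hn := hsbarmin _ hmem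
      have hsq : ‖sbar‖ ^ 2 ≤ ‖sbar + t • (sh - sbar)‖ ^ 2 :=
        pow_le_pow_left₀ (norm_nonneg _) hn 2
      have hexp : ‖sbar + t • (sh - sbar)‖ ^ 2
          = ‖sbar‖ ^ 2 + 2 * (t * ⟪sbar, sh - sbar⟫) + t ^ 2 * ‖sh - sbar‖ ^ 2 := by
        rw [norm_add_sq_real, real_inner_smul_right, norm_smul]
        simp only [Real.norm_eq_abs, mul_pow, sq_abs]
      have h5 : t * 0 ≤ t * (2 * ⟪sbar, sh - sbar⟫ + t * ‖sh - sbar‖ ^ 2) := by nlinarith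
      linarith [le_of_mul_le_mul_left h5 ht.1]
    have hfineq : sh = sbar := by
      have e1 : ⟪sh, sbar - sh⟫ = ⟪sh, sbar⟫ - ‖sh‖ ^ 2 := by
        rw [inner_sub_right, real_inner_self_eq_norm_sq]
      have e2 : ⟪sbar, sh - sbar⟫ = ⟪sbar, sh⟫ - ‖sbar‖ ^ 2 := by
        rw [inner_sub_right, real_inner_self_eq_norm_sq]
      have e3 : ⟪sbar, sh⟫ = ⟪sh, sbar⟫ := real_inner_comm _ _
      have e4 : ‖sh - sbar‖ ^ 2 = ‖sh‖ ^ 2 - 2 * ⟪sh, sbar⟫ + ‖sbar‖ ^ 2 :=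
        norm_sub_sq_real _ _
      have hle0 : ‖sh - sbar‖ ^ 2 ≤ 0 := by linarith
      have hz : ‖sh - sbar‖ = 0 := by nlinarith [norm_nonneg (sh - sbar)]
      have : sh - sbar = 0 := norm_eq_zero.1 hz
      exact sub_eq_zero.1 this
    have hfeas : g xbar + sbar = ybar := by rw [← hfineq, hybeq]
    refine ⟨hyK, hfeas, ?_⟩
    intro x y hy hfe
    have hineq := haug x y hy
    unfold auglagr at hineq
    have hgy : g x - y = -sbar := by rw [← hfe]; abel
    have hgyb : g xbar - ybar = -sbar := by rw [hvs, hfineq]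
    rw [hgy, hgyb] at hineq
    linarith
end
end

section
/- Assume s̄ ≠ 0, val(P(s̄)) ∈ ℝ, ν is lower semi-continuous at s̄, and Sol(D(s̄)) ≠ ∅. Let {(x^k, y^k, λ^k)} be generated by the augmented Lagrangian method and set s^k = y^k − g(x^k). Then: (i) the sequence {‖s^k‖} is nonincreasing; (ii) the sequence {dist(λ^k, Sol(D(s̄)))} is nonincreasing; (iii) if r_k ≥ r̲ for some r̲ > 0 and all k, then s^k → s̄. -/
open Set Filter Topology Bornology Metric
open scoped RealInnerProductSpace

noncomputable section

variable {E : Type*} [NormedAddCommGroup E] [InnerProductSpace ℝ E]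
variable {Y : Type*} [NormedAddCommGroup Y] [InnerProductSpace ℝ Y]

section AuxALM

lemma nonneg_of_forall_pos' {a : ℝ} (h : ∀ ε : ℝ, 0 < ε → 0 ≤ a + ε) : 0 ≤ a := by
  have : -a ≤ 0 := le_of_forall_pos_le_add (fun ε hε => by linarith [h ε hε])
  linarith

lemma nonneg_of_small_t' {a C : ℝ} (hC : 0 ≤ C)
    (h : ∀ t : ℝ, 0 < t → t ≤ 1 → 0 ≤ a + t * C) : 0 ≤ a := by
  refine nonneg_of_forall_pos' (fun ε hε => ?_)
  have ht0 : 0 < min 1 (ε / (C + 1)) := lt_min one_pos (by positivity)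
  have h2 := h _ ht0 (min_le_left _ _)
  have h3 : min 1 (ε / (C + 1)) * C ≤ ε := by
    calc min 1 (ε / (C + 1)) * C ≤ (ε / (C + 1)) * C :=
          mul_le_mul_of_nonneg_right (min_le_right _ _) hC
    _ ≤ ε := by
          rw [div_mul_eq_mul_div, div_le_iff₀ (by linarith)]
          nlinarith
  linarith

lemma convex_feasShifts' (g : E → Y) (K : Set Y) (hgraph : Convex ℝ (gphGK g K)) :
    Convex ℝ (feasShifts g K) := by
  have : feasShifts g K = Prod.snd '' gphGK g K := by
    ext s
    simp [feasShifts, gphGK, Prod.exists]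
  rw [this]
  exact hgraph.linear_image (LinearMap.snd ℝ E Y)

lemma proj_lb' {S : Set Y} (hS : Convex ℝ S) {sb : Y} (hsb : sb ∈ S)
    (hmin : ∀ s ∈ S, ‖sb‖ ≤ ‖s‖) : ∀ s ∈ S, ‖sb‖ ^ 2 ≤ ⟪sb, s⟫ := by
  intro s hs
  have key : 0 ≤ 2 * ⟪sb, s - sb⟫ := by
    refine nonneg_of_small_t' (C := ‖s - sb‖ ^ 2) (by positivity) (fun t ht ht1 => ?_)
    have hmem : sb + t • (s - sb) ∈ S := by
      have h := hS hsb hs (by linarith : (0:ℝ) ≤ 1 - t) ht.le (by ring)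
      have : (1 - t) • sb + t • s = sb + t • (s - sb) := by module
      rwa [this] at h
    have h1 : ‖sb‖ ^ 2 ≤ ‖sb + t • (s - sb)‖ ^ 2 := by
      have := hmin _ hmem
      nlinarith [norm_nonneg sb]
    rw [norm_add_sq_real, real_inner_smul_right, norm_smul, mul_pow] at h1
    simp only [Real.norm_eq_abs, sq_abs] at h1
    nlinarith
  have hexp : ⟪sb, s - sb⟫ = ⟪sb, s⟫ - ‖sb‖ ^ 2 := by
    rw [inner_sub_right, real_inner_self_eq_norm_sq]
  linarith [hexp ▸ key]

lemma lagr_min' (f : E → ℝ) (g : E → Y) (K : Set Y)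
    (hfconv : ConvexOn ℝ Set.univ f) (hgraph : Convex ℝ (gphGK g K))
    (r : ℝ) (hr : 0 < r) (lam0 : Y) (x1 : E) (y1 : Y) (hy1 : y1 ∈ K)
    (hmin : ∀ x' y', y' ∈ K → auglagr f g r x1 y1 lam0 ≤ auglagr f g r x' y' lam0) :
    ∀ x' y', y' ∈ K →
      lagr f g x1 y1 (lam0 + r • (g x1 - y1)) ≤ lagr f g x' y' (lam0 + r • (g x1 - y1)) := by
  intro x' y' hy'
  set w1 : Y := y1 - g x1 with hw1
  set w' : Y := y' - g x' with hw'
  have key : 0 ≤ (f x' - f x1) - ⟪lam0, w' - w1⟫ + r * ⟪w1, w' - w1⟫ := by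
    refine nonneg_of_small_t' (C := r / 2 * ‖w' - w1‖ ^ 2) (by positivity) (fun t ht ht1 => ?_)
    set xt : E := (1 - t) • x1 + t • x' with hxt
    set wt : Y := (1 - t) • w1 + t • w' with hwt
    have hmemt : (xt, wt) ∈ gphGK g K := by
      have m1 : ((x1, w1) : E × Y) ∈ gphGK g K := by
        simp [gphGK, hw1]; exact hy1
      have m2 : ((x', w') : E × Y) ∈ gphGK g K := by
        simp [gphGK, hw']; exact hy'
      have := hgraph m1 m2 (by linarith : (0:ℝ) ≤ 1 - t) ht.le (by ring)
      simpa [Prod.smul_mk, Prod.mk_add_mk, hxt, hwt] using this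
    set yt : Y := g xt + wt with hyt
    have hytK : yt ∈ K := hmemt
    have hcomp := hmin xt yt hytK
    have hgyt : g xt - yt = -wt := by rw [hyt]; abel
    have hgy1 : g x1 - y1 = -w1 := by rw [hw1]; abel
    rw [auglagr, auglagr, hgyt, hgy1] at hcomp
    have hfxt : f xt ≤ (1 - t) * f x1 + t * f x' :=
      hfconv.2 (mem_univ x1) (mem_univ x') (by linarith) ht.le (by ring)
    have hwt2 : wt = w1 + t • (w' - w1) := by rw [hwt]; module
    have hnorm : ‖wt‖ ^ 2 = ‖w1‖ ^ 2 + 2 * (t * ⟪w1, w' - w1⟫) + t ^ 2 * ‖w' - w1‖ ^ 2 := by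
      rw [hwt2, norm_add_sq_real, real_inner_smul_right, norm_smul, mul_pow]
      simp [Real.norm_eq_abs, sq_abs]
    have hinner : ⟪lam0, -wt⟫ = -⟪lam0, w1⟫ - t * ⟪lam0, w' - w1⟫ := by
      rw [hwt2]
      simp [inner_add_right, real_inner_smul_right, inner_neg_right]
      ring
    have hinner1 : ⟪lam0, -w1⟫ = -⟪lam0, w1⟫ := by simp
    rw [norm_neg, norm_neg] at hcomp
    rw [hnorm, hinner, hinner1] at hcomp
    nlinarith [hcomp, hfxt, ht]
  set lamp : Y := lam0 + r • (g x1 - y1) with hlampdef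
  have hlamp : ∀ w : Y, ⟪lamp, w⟫ = ⟪lam0, w⟫ - r * ⟪w1, w⟫ := by
    intro w
    rw [hlampdef, inner_add_left, real_inner_smul_left]
    rw [show g x1 - y1 = -w1 by rw [hw1]; abel, inner_neg_left]; ring
  have hl1 : lagr f g x1 y1 lamp = f x1 - (⟪lam0, w1⟫ - r * ⟪w1, w1⟫) := by
    rw [lagr, show g x1 - y1 = -w1 by rw [hw1]; abel, inner_neg_right, hlamp w1]
    ring
  have hl2 : lagr f g x' y' lamp = f x' - (⟪lam0, w'⟫ - r * ⟪w1, w'⟫) := by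
    rw [lagr, show g x' - y' = -w' by rw [hw']; abel, inner_neg_right, hlamp w']
    ring
  rw [hl1, hl2]
  have e1 : ⟪lam0, w' - w1⟫ = ⟪lam0, w'⟫ - ⟪lam0, w1⟫ := by rw [inner_sub_right]
  have e2 : ⟪w1, w' - w1⟫ = ⟪w1, w'⟫ - ⟪w1, w1⟫ := by rw [inner_sub_right]
  rw [e1, e2] at key
  linarith

lemma dualFn_ge' (f : E → ℝ) (g : E → Y) (K : Set Y) (l : Y) {x : E} {yy : Y} (hy : yy ∈ K) :
    ((-(lagr f g x yy l) : ℝ) : EReal) ≤ dualFn f g K l := by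
  rw [dualFn, EReal.coe_neg]
  exact EReal.neg_le_neg_iff.mpr (sInf_le ⟨(x, yy), hy, rfl⟩)

lemma dualFn_le' (f : E → ℝ) (g : E → Y) (K : Set Y) (l : Y) {c : ℝ}
    (h : ∀ x yy, yy ∈ K → c ≤ lagr f g x yy l) :
    dualFn f g K l ≤ ((-c : ℝ) : EReal) := by
  rw [dualFn, EReal.coe_neg]
  refine EReal.neg_le_neg_iff.mpr (le_sInf ?_)
  rintro b ⟨⟨xx, yy⟩, hyy, rfl⟩
  exact EReal.coe_le_coe_iff.mpr (h xx yy hyy)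

lemma dualFn_lb_of_eq' (f : E → ℝ) (g : E → Y) (K : Set Y) (l : Y) {v : ℝ}
    (h : dualFn f g K l = (v : EReal)) :
    ∀ x yy, yy ∈ K → -v ≤ lagr f g x yy l := by
  intro x yy hy
  have := dualFn_ge' f g K l hy (x := x)
  rw [h, EReal.coe_le_coe_iff] at this
  linarith

lemma dualFn_real' (f : E → ℝ) (g : E → Y) (K : Set Y) (l : Y)
    (x0 : E) {y0 : Y} (hy0 : y0 ∈ K) (hne : dualFn f g K l ≠ ⊤) :
    ∃ v : ℝ, dualFn f g K l = (v : EReal) := by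
  have hbot : dualFn f g K l ≠ ⊥ := by
    intro h
    have := dualFn_ge' f g K l hy0 (x := x0)
    rw [h, le_bot_iff] at this
    exact EReal.coe_ne_bot _ this
  exact ⟨(dualFn f g K l).toReal, (EReal.coe_toReal hne hbot).symm⟩

end AuxALM

set_option maxHeartbeats 1000000

/-- Theorem 4.2: for the sequences generated by the augmented
Lagrangian method: (i) `{‖sᵏ‖}` is nonincreasing; (ii) `{dist(λᵏ, Sol(D(s̄)))}` is
nonincreasing; (iii) if `r_k ≥ r̲ > 0` for all `k`, then `sᵏ → s̄`. -/
theorem alm_convergence {n : ℕ} {Y : Type*} [NormedAddCommGroup Y]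
    [InnerProductSpace ℝ Y] [FiniteDimensional ℝ Y]
    (f : EuclideanSpace ℝ (Fin n) → ℝ) (g : EuclideanSpace ℝ (Fin n) → Y) (K : Set Y)
    (hfconv : ConvexOn ℝ Set.univ f)
    (hKne : K.Nonempty) (hKclosed : IsClosed K) (hKconv : Convex ℝ K)
    (hgraph : Convex ℝ (gphGK g K))
    (hSclosed : IsClosed (feasShifts g K))
    (sbar : Y) (hsbarS : sbar ∈ feasShifts g K)
    (hsbarmin : ∀ s ∈ feasShifts g K, ‖sbar‖ ≤ ‖s‖)
    (hsbarne : sbar ≠ 0)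
    (hval : ∃ v : ℝ, valFn f g K sbar = (v : EReal))
    (hlsc : LowerSemicontinuousAt (valFn f g K) sbar)
    (hSolne : (dualSol f g K sbar).Nonempty)
    -- the augmented Lagrangian method
    (x : ℕ → EuclideanSpace ℝ (Fin n)) (y : ℕ → Y) (lam : ℕ → Y) (r : ℕ → ℝ)
    (hr0 : 0 < r 0) (hrmono : ∀ k, r k ≤ r (k + 1))
    (hargmin : ∀ k, y (k + 1) ∈ K ∧ ∀ x' y', y' ∈ K →
      auglagr f g (r k) (x (k + 1)) (y (k + 1)) (lam k) ≤ auglagr f g (r k) x' y' (lam k))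
    (hlam : ∀ k, lam (k + 1) = lam k + r k • (g (x (k + 1)) - y (k + 1))) :
    -- (i)
    (∀ k, ‖y (k + 2) - g (x (k + 2))‖ ≤ ‖y (k + 1) - g (x (k + 1))‖) ∧
    -- (ii)
    (∀ k, Metric.infDist (lam (k + 1)) (dualSol f g K sbar) ≤
      Metric.infDist (lam k) (dualSol f g K sbar)) ∧
    -- (iii)
    (∀ rlow : ℝ, 0 < rlow → (∀ k, rlow ≤ r k) →
      Tendsto (fun k => y (k + 1) - g (x (k + 1))) atTop (𝓝 sbar)) := by
  -- basic facts
  have hrpos : ∀ k, 0 < r k := by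
    intro k
    induction k with
    | zero => exact hr0
    | succ m ih => exact ih.trans_le (hrmono m)
  have hsmem : ∀ k, y (k + 1) - g (x (k + 1)) ∈ feasShifts g K := by
    intro k
    exact ⟨x (k + 1), by simpa using (hargmin k).1⟩
  have hSconv := convex_feasShifts' g K hgraph
  have hproj : ∀ s ∈ feasShifts g K, ‖sbar‖ ^ 2 ≤ ⟪sbar, s⟫ :=
    proj_lb' hSconv hsbarS hsbarmin
  have hlam' : ∀ k, lam (k + 1) = lam k - r k • (y (k + 1) - g (x (k + 1))) := by
    intro k; rw [hlam k]; module
  have hsq : ∀ k, ‖sbar‖ ^ 2 ≤ ‖y (k + 1) - g (x (k + 1))‖ ^ 2 := by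
    intro k
    have := hsbarmin _ (hsmem k)
    nlinarith [norm_nonneg sbar]
  -- the iterate minimizes the ordinary Lagrangian at the new multiplier
  have hF2 : ∀ k, ∀ x' y', y' ∈ K →
      lagr f g (x (k + 1)) (y (k + 1)) (lam (k + 1)) ≤ lagr f g x' y' (lam (k + 1)) := by
    intro k
    have h := lagr_min' f g K hfconv hgraph (r k) (hrpos k) (lam k)
      (x (k + 1)) (y (k + 1)) (hargmin k).1 (hargmin k).2
    rwa [← hlam k] at h
  -- the dual function is real-valued at the iterates
  have hF3 : ∀ k, dualFn f g K (lam (k + 1))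
      = ((-(lagr f g (x (k + 1)) (y (k + 1)) (lam (k + 1))) : ℝ) : EReal) := by
    intro k
    refine le_antisymm ?_ (dualFn_ge' f g K _ (hargmin k).1)
    exact dualFn_le' f g K (lam (k + 1)) (fun x' y' hy' => hF2 k x' y' hy')
  -- the dual function is real-valued on the dual solution set
  have hF4 : ∀ lb ∈ dualSol f g K sbar, ∃ v : ℝ, dualFn f g K lb = (v : EReal) := by
    intro lb hlb
    refine dualFn_real' f g K lb (x 1) (hargmin 0).1 ?_
    intro htop
    have h := hlb (lam 1)
    rw [htop, hF3 0, ← EReal.coe_sub] at h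
    have hbot : ((⟪sbar, lb⟫ : ℝ) : EReal) - (⊤ : EReal) = (⊥ : EReal) := by
      exact EReal.sub_top _
    rw [hbot, le_bot_iff] at h
    exact EReal.coe_ne_bot _ h
  -- monotonicity-type inequality
  have hF5 : ∀ k, ∀ lb ∈ dualSol f g K sbar,
      0 ≤ ⟪(y (k + 1) - g (x (k + 1))) - sbar, lam (k + 1) - lb⟫ := by
    intro k lb hlb
    obtain ⟨tb, htb⟩ := hF4 lb hlb
    have h2 := dualFn_lb_of_eq' f g K lb htb (x (k + 1)) (y (k + 1)) (hargmin k).1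
    have h3 : ⟪sbar, lam (k + 1)⟫ - (-(lagr f g (x (k + 1)) (y (k + 1)) (lam (k + 1))))
        ≤ ⟪sbar, lb⟫ - tb := by
      have h := hlb (lam (k + 1))
      rw [hF3 k, htb, ← EReal.coe_sub, ← EReal.coe_sub, EReal.coe_le_coe_iff] at h
      exact h
    rw [lagr] at h2 h3
    rw [inner_sub_left, inner_sub_right, inner_sub_right]
    have e1 : ⟪lam (k + 1), g (x (k + 1)) - y (k + 1)⟫
        = -⟪y (k + 1) - g (x (k + 1)), lam (k + 1)⟫ := by
      rw [show g (x (k + 1)) - y (k + 1) = -(y (k + 1) - g (x (k + 1))) by abel,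
        inner_neg_right, real_inner_comm]
    have e2 : ⟪lb, g (x (k + 1)) - y (k + 1)⟫
        = -⟪y (k + 1) - g (x (k + 1)), lb⟫ := by
      rw [show g (x (k + 1)) - y (k + 1) = -(y (k + 1) - g (x (k + 1))) by abel,
        inner_neg_right, real_inner_comm]
    rw [e1] at h3
    rw [e2] at h2
    have c1 : ⟪sbar, lam (k + 1)⟫ = ⟪lam (k + 1), sbar⟫ := real_inner_comm _ _
    have c2 : ⟪sbar, lb⟫ = ⟪lb, sbar⟫ := real_inner_comm _ _
    have c3 : ⟪lam (k + 1), sbar⟫ = ⟪sbar, lam (k + 1)⟫ := real_inner_comm _ _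
    linarith [real_inner_comm sbar (lam (k+1)), real_inner_comm sbar lb]
  -- invariance of the dual solution set
  have hF6 : ∀ lb ∈ dualSol f g K sbar, ∀ t : ℝ, 0 ≤ t →
      lb - t • sbar ∈ dualSol f g K sbar := by
    intro lb hlb t ht
    obtain ⟨tb, htb⟩ := hF4 lb hlb
    have hlow : ∀ x' yy', yy' ∈ K →
        -(tb - t * ‖sbar‖ ^ 2) ≤ lagr f g x' yy' (lb - t • sbar) := by
      intro x' yy' hy'
      have h2 := dualFn_lb_of_eq' f g K lb htb x' yy' hy'
      have hmem : yy' - g x' ∈ feasShifts g K := ⟨x', by simpa using hy'⟩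
      have hp := hproj _ hmem
      rw [lagr] at h2 ⊢
      rw [inner_sub_left, real_inner_smul_left]
      have e : ⟪sbar, g x' - yy'⟫ = -⟪sbar, yy' - g x'⟫ := by
        rw [show g x' - yy' = -(yy' - g x') by abel, inner_neg_right]
      rw [e]
      nlinarith [mul_le_mul_of_nonneg_left hp ht]
    have hup : dualFn f g K (lb - t • sbar) ≤ ((tb - t * ‖sbar‖ ^ 2 : ℝ) : EReal) := by
      have h := dualFn_le' f g K (lb - t • sbar) hlow
      simpa using h
    intro l'
    have h := hlb l'
    rw [htb] at h
    refine h.trans ?_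
    have hinner : ⟪sbar, lb - t • sbar⟫ = ⟪sbar, lb⟫ - t * ‖sbar‖ ^ 2 := by
      rw [inner_sub_right, real_inner_smul_right, real_inner_self_eq_norm_sq]
    calc ((⟪sbar, lb⟫ : ℝ) : EReal) - ((tb : ℝ) : EReal)
        = ((⟪sbar, lb - t • sbar⟫ : ℝ) : EReal) - ((tb - t * ‖sbar‖ ^ 2 : ℝ) : EReal) := by
          rw [← EReal.coe_sub, ← EReal.coe_sub, EReal.coe_eq_coe_iff, hinner]; ring
      _ ≤ ((⟪sbar, lb - t • sbar⟫ : ℝ) : EReal) - dualFn f g K (lb - t • sbar) :=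
          EReal.sub_le_sub le_rfl hup
  -- quantitative key estimate
  have hF7 : ∀ k, ∀ lb ∈ dualSol f g K sbar,
      (infDist (lam (k + 1)) (dualSol f g K sbar)) ^ 2
        + (r k) ^ 2 * (‖y (k + 1) - g (x (k + 1))‖ ^ 2 - ‖sbar‖ ^ 2)
      ≤ (dist (lam k) lb) ^ 2 := by
    intro k lb hlb
    have hmemSol : lb - r k • sbar ∈ dualSol f g K sbar := hF6 lb hlb (r k) (hrpos k).le
    have h1 : infDist (lam (k + 1)) (dualSol f g K sbar) ≤ dist (lam (k + 1)) (lb - r k • sbar) :=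
      infDist_le_dist_of_mem hmemSol
    have h1sq : (infDist (lam (k + 1)) (dualSol f g K sbar)) ^ 2
        ≤ (dist (lam (k + 1)) (lb - r k • sbar)) ^ 2 := by
      nlinarith [infDist_nonneg (s := dualSol f g K sbar) (x := lam (k + 1)), dist_nonneg (x := lam (k+1)) (y := lb - r k • sbar)]
    set s : Y := y (k + 1) - g (x (k + 1)) with hsdef
    have hvec : lam (k + 1) - (lb - r k • sbar) = (lam k - lb) - r k • (s - sbar) := by
      rw [hlam' k]; module
    have hnorm : (dist (lam (k + 1)) (lb - r k • sbar)) ^ 2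
        = ‖lam k - lb‖ ^ 2 - 2 * (r k * ⟪lam k - lb, s - sbar⟫) + (r k) ^ 2 * ‖s - sbar‖ ^ 2 := by
      rw [dist_eq_norm, hvec, norm_sub_sq_real, real_inner_smul_right, norm_smul, mul_pow]
      simp only [Real.norm_eq_abs, sq_abs]
      try ring
    have hdec : ⟪lam k - lb, s - sbar⟫
        = ⟪lam (k + 1) - lb, s - sbar⟫ + r k * ⟪s, s - sbar⟫ := by
      rw [show lam k - lb = (lam (k + 1) - lb) + r k • s by rw [hlam' k]; module,
        inner_add_left, real_inner_smul_left]
    have h5 := hF5 k lb hlb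
    rw [← hsdef] at h5
    have h5' : 0 ≤ ⟪lam (k + 1) - lb, s - sbar⟫ := by
      rw [real_inner_comm]; exact h5
    have hexp : ‖s - sbar‖ ^ 2 = ‖s‖ ^ 2 - 2 * ⟪s, sbar⟫ + ‖sbar‖ ^ 2 := by
      rw [norm_sub_sq_real]
    have hip : ⟪s, s - sbar⟫ = ‖s‖ ^ 2 - ⟪s, sbar⟫ := by
      rw [inner_sub_right, real_inner_self_eq_norm_sq]
    have hdist : dist (lam k) lb = ‖lam k - lb‖ := dist_eq_norm _ _
    rw [hdist]
    nlinarith [mul_nonneg (hrpos k).le h5', sq_nonneg (r k), hrpos k]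
  -- part (i)
  have parti : ∀ k, ‖y (k + 2) - g (x (k + 2))‖ ≤ ‖y (k + 1) - g (x (k + 1))‖ := by
    intro k
    set s1 : Y := y (k + 1) - g (x (k + 1)) with hs1
    set s2 : Y := y (k + 2) - g (x (k + 2)) with hs2
    have i1 := hF2 (k + 1) (x (k + 1)) (y (k + 1)) (hargmin k).1
    have i2 := hF2 k (x (k + 2)) (y (k + 2)) (hargmin (k + 1)).1
    rw [lagr, lagr] at i1 i2
    have e1 : g (x (k + 1)) - y (k + 1) = -s1 := by rw [hs1]; abel
    have e2 : g (x (k + 2)) - y (k + 2) = -s2 := by rw [hs2]; abel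
    rw [e1, e2] at i1 i2
    rw [inner_neg_right, inner_neg_right] at i1 i2
    -- i1 : f₂ - ⟪λ₂, s₂⟫ ≤ f₁ - ⟪λ₂, s₁⟫ ; i2 : f₁ - ⟪λ₁, s₁⟫ ≤ f₂ - ⟪λ₁, s₂⟫
    have hlamdiff : lam (k + 1) - lam (k + 2) = r (k + 1) • s2 := by
      rw [hlam' (k + 1)]; module
    have hkey : r (k + 1) * ⟪s2, s2 - s1⟫ ≤ 0 := by
      have h := add_le_add i1 i2
      have e3 : ⟪lam (k + 1) - lam (k + 2), s2 - s1⟫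
          = ⟪lam (k + 1), s2⟫ - ⟪lam (k + 1), s1⟫ - ⟪lam (k + 2), s2⟫ + ⟪lam (k + 2), s1⟫ := by
        simp only [inner_sub_left, inner_sub_right]; ring
      have e4 : ⟪lam (k + 1) - lam (k + 2), s2 - s1⟫ = r (k + 1) * ⟪s2, s2 - s1⟫ := by
        rw [hlamdiff, real_inner_smul_left]
      linarith [h, e3, e4]
    have h2 : ⟪s2, s2 - s1⟫ ≤ 0 := by
      by_contra hcon
      push_neg at hcon
      nlinarith [mul_pos (hrpos (k + 1)) hcon]
    have h3 : ‖s2‖ ^ 2 ≤ ⟪s2, s1⟫ := by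
      rw [inner_sub_right, real_inner_self_eq_norm_sq] at h2
      linarith
    have h4 : ⟪s2, s1⟫ ≤ ‖s2‖ * ‖s1‖ := real_inner_le_norm s2 s1
    nlinarith [norm_nonneg s1, norm_nonneg s2]
  -- part (ii)
  have partii : ∀ k, infDist (lam (k + 1)) (dualSol f g K sbar)
      ≤ infDist (lam k) (dualSol f g K sbar) := by
    intro k
    have hle : ∀ lb ∈ dualSol f g K sbar,
        infDist (lam (k + 1)) (dualSol f g K sbar) ≤ dist (lam k) lb := by
      intro lb hlb
      have h7 := hF7 k lb hlb
      have hsqle : (infDist (lam (k + 1)) (dualSol f g K sbar)) ^ 2 ≤ (dist (lam k) lb) ^ 2 := by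
        nlinarith [hsq k, sq_nonneg (r k)]
      by_contra hcon
      push_neg at hcon
      nlinarith [dist_nonneg (x := lam k) (y := lb),
        infDist_nonneg (s := dualSol f g K sbar) (x := lam (k + 1))]
    refine le_of_forall_pos_le_add (fun ε hε => ?_)
    obtain ⟨lb, hlb, hd⟩ := (infDist_lt_iff hSolne).mp
      (lt_add_of_pos_right (infDist (lam k) (dualSol f g K sbar)) hε)
    exact (hle lb hlb).trans hd.le
  refine ⟨parti, partii, ?_⟩
  -- part (iii)
  intro rlow hrlow hrk
  set tseq : ℕ → ℝ := fun k => ‖y (k + 1) - g (x (k + 1))‖ ^ 2 - ‖sbar‖ ^ 2 with htseq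
  have ht_nn : ∀ k, 0 ≤ tseq k := by
    intro k
    have := hsq k
    simp only [htseq]
    linarith
  have ht_mono : ∀ k, tseq (k + 1) ≤ tseq k := by
    intro k
    have h := parti k
    simp only [htseq]
    nlinarith [norm_nonneg (y (k + 2) - g (x (k + 2))), norm_nonneg (y (k + 1) - g (x (k + 1)))]
  have hstep : ∀ k, (infDist (lam (k + 1)) (dualSol f g K sbar)) ^ 2 + rlow ^ 2 * tseq k
      ≤ (infDist (lam k) (dualSol f g K sbar)) ^ 2 := by
    intro k
    refine le_of_forall_pos_le_add (fun ε hε => ?_)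
    set d : ℝ := infDist (lam k) (dualSol f g K sbar) with hd
    have hd0 : 0 ≤ d := infDist_nonneg
    have hδ0 : 0 < min 1 (ε / (2 * d + 1)) := lt_min one_pos (by positivity)
    obtain ⟨lb, hlb, hdist⟩ := (infDist_lt_iff hSolne).mp
      (lt_add_of_pos_right d hδ0)
    have h7 := hF7 k lb hlb
    have hr2 : rlow ^ 2 * tseq k ≤ (r k) ^ 2 * tseq k := by
      have : rlow ≤ r k := hrk k
      have h2 : rlow ^ 2 ≤ (r k) ^ 2 := by nlinarith
      exact mul_le_mul_of_nonneg_right h2 (ht_nn k)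
    have hdsq : (dist (lam k) lb) ^ 2 ≤ (d + min 1 (ε / (2 * d + 1))) ^ 2 := by
      nlinarith [dist_nonneg (x := lam k) (y := lb), hdist.le, hd0, hδ0]
    have hfin : (d + min 1 (ε / (2 * d + 1))) ^ 2 ≤ d ^ 2 + ε := by
      have h1 : min 1 (ε / (2 * d + 1)) ≤ 1 := min_le_left _ _
      have h2 : min 1 (ε / (2 * d + 1)) ≤ ε / (2 * d + 1) := min_le_right _ _
      have h3 : min 1 (ε / (2 * d + 1)) * (2 * d + 1) ≤ ε := by
        rw [← le_div_iff₀ (by linarith)]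
        exact h2
      nlinarith [hδ0.le]
    simp only [htseq] at h7 hr2 ⊢
    linarith
  have htele : ∀ m : ℕ, (infDist (lam (m + 1)) (dualSol f g K sbar)) ^ 2
      + rlow ^ 2 * (((m : ℝ) + 1) * tseq m) ≤ (infDist (lam 0) (dualSol f g K sbar)) ^ 2 := by
    intro m
    induction m with
    | zero => simpa using hstep 0
    | succ p ih =>
      have h1 := hstep (p + 1)
      have h2 : ((p : ℝ) + 1) * tseq (p + 1) ≤ ((p : ℝ) + 1) * tseq p := by
        have := ht_mono p
        have hp : (0 : ℝ) ≤ (p : ℝ) + 1 := by positivity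
        exact mul_le_mul_of_nonneg_left this hp
      have h3 : rlow ^ 2 * (((p : ℝ) + 1) * tseq (p + 1)) ≤ rlow ^ 2 * (((p : ℝ) + 1) * tseq p) :=
        mul_le_mul_of_nonneg_left h2 (sq_nonneg rlow)
      push_cast
      push_cast at ih
      nlinarith [h1, ih, h3]
  have hC : ∀ m : ℕ, tseq m ≤ (infDist (lam 0) (dualSol f g K sbar)) ^ 2 / rlow ^ 2
      * (1 / ((m : ℝ) + 1)) := by
    intro m
    have h := htele m
    have hpos : (0 : ℝ) < (m : ℝ) + 1 := by positivity
    have hrpos2 : (0 : ℝ) < rlow ^ 2 := by positivity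
    have key : tseq m ≤ (infDist (lam 0) (dualSol f g K sbar)) ^ 2 / (rlow ^ 2 * ((m : ℝ) + 1)) := by
      rw [le_div_iff₀ (by positivity)]
      nlinarith [sq_nonneg (infDist (lam (m + 1)) (dualSol f g K sbar))]
    calc tseq m ≤ (infDist (lam 0) (dualSol f g K sbar)) ^ 2 / (rlow ^ 2 * ((m : ℝ) + 1)) := key
      _ = (infDist (lam 0) (dualSol f g K sbar)) ^ 2 / rlow ^ 2 * (1 / ((m : ℝ) + 1)) := by
          rw [div_mul_eq_mul_div, mul_one_div, div_div, mul_comm]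
  have hdiff : ∀ m : ℕ, ‖(y (m + 1) - g (x (m + 1))) - sbar‖ ^ 2 ≤ tseq m := by
    intro m
    have hp := hproj _ (hsmem m)
    rw [norm_sub_sq_real]
    simp only [htseq]
    have : ⟪y (m + 1) - g (x (m + 1)), sbar⟫ = ⟪sbar, y (m + 1) - g (x (m + 1))⟫ :=
      real_inner_comm _ _
    linarith
  have hlimC : Tendsto (fun m : ℕ => (infDist (lam 0) (dualSol f g K sbar)) ^ 2 / rlow ^ 2
      * (1 / ((m : ℝ) + 1))) atTop (𝓝 0) := by
    have := tendsto_one_div_add_atTop_nhds_zero_nat.const_mul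
      ((infDist (lam 0) (dualSol f g K sbar)) ^ 2 / rlow ^ 2)
    rw [mul_zero] at this
    exact this
  have hlim0 : Tendsto (fun m : ℕ => ‖(y (m + 1) - g (x (m + 1))) - sbar‖ ^ 2) atTop (𝓝 0) :=
    squeeze_zero (fun m => by positivity) (fun m => (hdiff m).trans (hC m)) hlimC
  have hlim1 : Tendsto (fun m : ℕ => ‖(y (m + 1) - g (x (m + 1))) - sbar‖) atTop (𝓝 0) := by
    have h := hlim0.sqrt
    simpa [Real.sqrt_sq (norm_nonneg _)] using h
  exact tendsto_iff_norm_sub_tendsto_zero.mpr hlim1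
end
end

section
/- Assume s̄ ≠ 0, val(P(s̄)) ∈ ℝ, ν is lower semi-continuous at s̄, and Sol(D(s̄)) ≠ ∅. Let {(x^k, y^k, λ^k)} be generated by the augmented Lagrangian method with r_k ≥ r̲ for some r̲ > 0. Then the multiplier sequence {λ^k} diverges (in particular ‖λ^{k+1} − λ^k‖ = r_k ‖s^{k+1}‖ → a limit ≥ r̲‖s̄‖ > 0, so {λ^k} is not convergent). -/
open Set Filter Topology Bornology Metric
open scoped RealInnerProductSpace

noncomputable section

variable {E : Type*} [NormedAddCommGroup E] [InnerProductSpace ℝ E]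
variable {Y : Type*} [NormedAddCommGroup Y] [InnerProductSpace ℝ Y]

/-- Corollary 4.1: the multiplier sequence produced by the augmented
Lagrangian method with `r_k ≥ r̲ > 0` diverges (is not convergent). -/
theorem alm_multipliers_diverge {n : ℕ} {Y : Type*} [NormedAddCommGroup Y]
    [InnerProductSpace ℝ Y] [FiniteDimensional ℝ Y]
    (f : EuclideanSpace ℝ (Fin n) → ℝ) (g : EuclideanSpace ℝ (Fin n) → Y) (K : Set Y)
    (hfconv : ConvexOn ℝ Set.univ f)
    (hKne : K.Nonempty) (hKclosed : IsClosed K) (hKconv : Convex ℝ K)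
    (hgraph : Convex ℝ (gphGK g K))
    (hSclosed : IsClosed (feasShifts g K))
    (sbar : Y) (hsbarS : sbar ∈ feasShifts g K)
    (hsbarmin : ∀ s ∈ feasShifts g K, ‖sbar‖ ≤ ‖s‖)
    (hsbarne : sbar ≠ 0)
    (hval : ∃ v : ℝ, valFn f g K sbar = (v : EReal))
    (hlsc : LowerSemicontinuousAt (valFn f g K) sbar)
    (hSolne : (dualSol f g K sbar).Nonempty)
    -- the augmented Lagrangian method
    (x : ℕ → EuclideanSpace ℝ (Fin n)) (y : ℕ → Y) (lam : ℕ → Y) (r : ℕ → ℝ)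
    (hrmono : ∀ k, r k ≤ r (k + 1))
    (rlow : ℝ) (hrlowpos : 0 < rlow) (hrlow : ∀ k, rlow ≤ r k)
    (hargmin : ∀ k, y (k + 1) ∈ K ∧ ∀ x' y', y' ∈ K →
      auglagr f g (r k) (x (k + 1)) (y (k + 1)) (lam k) ≤ auglagr f g (r k) x' y' (lam k))
    (hlam : ∀ k, lam (k + 1) = lam k + r k • (g (x (k + 1)) - y (k + 1))) :
    ¬ ∃ L : Y, Tendsto lam atTop (𝓝 L) := by
  rintro ⟨L, hL⟩
  set d : ℕ → Y := fun k => g (x (k + 1)) - y (k + 1) with hd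
  have hdiff : Tendsto (fun k => lam (k + 1) - lam k) atTop (𝓝 0) := by
    have h1 : Tendsto (fun k => lam (k + 1)) atTop (𝓝 L) :=
      hL.comp (tendsto_add_atTop_nat 1)
    simpa using h1.sub hL
  have heq : (fun k => lam (k + 1) - lam k) = fun k => r k • d k := by
    funext k; rw [hlam k]; abel
  rw [heq] at hdiff
  have hnorm : Tendsto (fun k => ‖r k • d k‖) atTop (𝓝 0) := by
    simpa using hdiff.norm
  have hdto : Tendsto (fun k => d k) atTop (𝓝 0) := by
    rw [tendsto_zero_iff_norm_tendsto_zero]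
    refine squeeze_zero (g := fun k => ‖r k • d k‖ / rlow)
      (fun k => norm_nonneg _) (fun k => ?_) (by simpa using hnorm.div_const rlow)
    rw [le_div_iff₀ hrlowpos, norm_smul, Real.norm_eq_abs,
      abs_of_pos (lt_of_lt_of_le hrlowpos (hrlow k)), mul_comm]
    exact mul_le_mul_of_nonneg_right (hrlow k) (norm_nonneg (d k))
  have hsto : Tendsto (fun k => -d k) atTop (𝓝 0) := by simpa using hdto.neg
  have hmem : ∀ k, -d k ∈ feasShifts g K := fun k =>
    ⟨x (k + 1), by simpa [hd] using (hargmin k).1⟩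
  have h0 : (0 : Y) ∈ feasShifts g K :=
    hSclosed.mem_of_tendsto hsto (Eventually.of_forall hmem)
  have := hsbarmin 0 h0
  simp only [norm_zero] at this
  exact hsbarne (norm_le_zero_iff.mp this)
end
end

section
/- Consider the augmented Lagrangian method applied to problem (P): minimize f(x) subject to g(x) = y, y ∈ K. Assume s̄ ≠ 0, val(P(s̄)) ∈ ℝ, ν is lower semi-continuous at s̄, Sol(D(s̄)) ≠ ∅, r_k ≥ r̲ > 0 for all k, and the set ω of accumulation points of {(x^k, y^k)} is nonempty. Then for every ε > 0 there exists a subsequence N ⊆ ℕ such that for every k ∈ N: (x^k, y^k) ∈ argmin{l_{r_{k-1}}(x, y, λ^{k-1}) : x ∈ ℝⁿ, y ∈ K}, ‖Dg(x^k)*(g(x^k) − y^k)‖ ≤ ε, and ‖Π_K(g(x^k)) − y^k‖ ≤ ε; i.e., the augmented Lagrangian method finds an approximate solution to the optimization problem with least constraint violation. -/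
open Set Filter Topology Bornology Metric
open scoped RealInnerProductSpace

noncomputable section

variable {E : Type*} [NormedAddCommGroup E] [InnerProductSpace ℝ E]
variable {Y : Type*} [NormedAddCommGroup Y] [InnerProductSpace ℝ Y]

/-- Auxiliary: if `c ≤ t * M` for all small positive `t`, then `c ≤ 0`. -/
lemma aux_le_zero {c M t₀ : ℝ} (ht₀ : 0 < t₀)
    (h : ∀ t : ℝ, 0 < t → t ≤ t₀ → c ≤ t * M) : c ≤ 0 := by
  by_contra hc
  push_neg at hc
  rcases le_or_gt M 0 with hM | hM
  · have h1 := h t₀ ht₀ le_rfl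
    nlinarith
  · have ht : 0 < min t₀ (c / (2 * M)) := lt_min ht₀ (by positivity)
    have h1 := h _ ht (min_le_left _ _)
    have h2 : min t₀ (c / (2 * M)) * M ≤ (c / (2 * M)) * M :=
      mul_le_mul_of_nonneg_right (min_le_right _ _) hM.le
    have h3 : (c / (2 * M)) * M = c / 2 := by field_simp
    linarith

/-- Auxiliary: comparison of squares for nonnegative reals. -/
lemma aux_sq_le {a b : ℝ} (ha : 0 ≤ a) (hb : 0 ≤ b) (h : a ^ 2 ≤ b ^ 2) : a ≤ b := by
  nlinarith


/-- Auxiliary algebraic identity for the augmented Lagrangian. -/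
lemma aux_ident {Y : Type*} [NormedAddCommGroup Y] [InnerProductSpace ℝ Y]
    (l d u : Y) (ρ : ℝ) :
    ⟪l + ρ • d, u⟫ + ρ / 2 * ‖u - d‖ ^ 2 - ρ / 2 * ‖d‖ ^ 2 = ⟪l, u⟫ + ρ / 2 * ‖u‖ ^ 2 := by
  rw [inner_add_left, real_inner_smul_left, norm_sub_sq_real, real_inner_comm d u]
  ring

set_option maxHeartbeats 1000000

/-- Theorem 4.3: the augmented Lagrangian method finds an approximate
solution to the problem with the least constraint violation: for every `ε > 0` there is
an (infinite) subsequence along which `(xᵏ, yᵏ)` minimizes the augmented Lagrangian,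
`‖Dg(xᵏ)*(g(xᵏ) - yᵏ)‖ ≤ ε`, and `‖Π_K(g(xᵏ)) - yᵏ‖ ≤ ε`. -/
theorem alm_approximate_solution {n : ℕ} {Y : Type*} [NormedAddCommGroup Y]
    [InnerProductSpace ℝ Y] [FiniteDimensional ℝ Y]
    (f : EuclideanSpace ℝ (Fin n) → ℝ) (g : EuclideanSpace ℝ (Fin n) → Y) (K : Set Y)
    (hfconv : ConvexOn ℝ Set.univ f) (hg : ContDiff ℝ (⊤ : ℕ∞) g)
    (hKne : K.Nonempty) (hKclosed : IsClosed K) (hKconv : Convex ℝ K)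
    (hgraph : Convex ℝ (gphGK g K))
    (hSclosed : IsClosed (feasShifts g K))
    (sbar : Y) (hsbarS : sbar ∈ feasShifts g K)
    (hsbarmin : ∀ s ∈ feasShifts g K, ‖sbar‖ ≤ ‖s‖)
    (hsbarne : sbar ≠ 0)
    (hval : ∃ v : ℝ, valFn f g K sbar = (v : EReal))
    (hlsc : LowerSemicontinuousAt (valFn f g K) sbar)
    (hSolne : (dualSol f g K sbar).Nonempty)
    -- the augmented Lagrangian method
    (x : ℕ → EuclideanSpace ℝ (Fin n)) (y : ℕ → Y) (lam : ℕ → Y) (r : ℕ → ℝ)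
    (hrmono : ∀ k, r k ≤ r (k + 1))
    (rlow : ℝ) (hrlowpos : 0 < rlow) (hrlow : ∀ k, rlow ≤ r k)
    (hargmin : ∀ k, y (k + 1) ∈ K ∧ ∀ x' y', y' ∈ K →
      auglagr f g (r k) (x (k + 1)) (y (k + 1)) (lam k) ≤ auglagr f g (r k) x' y' (lam k))
    (hlam : ∀ k, lam (k + 1) = lam k + r k • (g (x (k + 1)) - y (k + 1)))
    -- the set ω of accumulation points of {(xᵏ, yᵏ)} is nonempty
    (homega : ∃ p : EuclideanSpace ℝ (Fin n) × Y,
      MapClusterPt p atTop (fun k => (x k, y k))) :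
    ∀ ε : ℝ, 0 < ε → ∃ N : Set ℕ, N.Infinite ∧ ∀ k ∈ N, 1 ≤ k ∧
      (y k ∈ K ∧ ∀ x' y', y' ∈ K →
        auglagr f g (r (k - 1)) (x k) (y k) (lam (k - 1)) ≤
          auglagr f g (r (k - 1)) x' y' (lam (k - 1))) ∧
      ‖ContinuousLinearMap.adjoint (fderiv ℝ g (x k)) (g (x k) - y k)‖ ≤ ε ∧
      ∃ ytilde : Y, (ytilde ∈ K ∧ ∀ y' ∈ K, ‖g (x k) - ytilde‖ ≤ ‖g (x k) - y'‖) ∧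
        ‖ytilde - y k‖ ≤ ε := by
  intro ε hε
  classical
  -- basic consequences of the algorithm
  have hyK : ∀ k, 1 ≤ k → y k ∈ K := by
    intro k hk
    obtain ⟨m, rfl⟩ : ∃ m, k = m + 1 := ⟨k - 1, by omega⟩
    exact (hargmin m).1
  have hmemS : ∀ (x0 : EuclideanSpace ℝ (Fin n)) (y0 : Y), y0 ∈ K →
      (y0 - g x0) ∈ feasShifts g K := by
    intro x0 y0 h
    refine ⟨x0, ?_⟩
    show g x0 + (y0 - g x0) ∈ K
    rw [show g x0 + (y0 - g x0) = y0 by abel]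
    exact h
  have hnormge : ∀ k, 1 ≤ k → ‖sbar‖ ≤ ‖g (x k) - y k‖ := by
    intro k hk
    have := hsbarmin _ (hmemS (x k) (y k) (hyK k hk))
    rwa [norm_sub_rev] at this
  have hrpos : ∀ k, (0:ℝ) ≤ r k := fun k => le_trans hrlowpos.le (hrlow k)
  -- normal cone property of the multiplier
  have hNC : ∀ k, 1 ≤ k → ∀ yy ∈ K, ⟪lam k, yy - y k⟫ ≤ 0 := by
    intro k hk yy hyy
    obtain ⟨m, rfl⟩ : ∃ m, k = m + 1 := ⟨k - 1, by omega⟩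
    set X := x (m + 1)
    set Yv := y (m + 1)
    set w := yy - Yv with hw
    set d := g X - Yv with hdd
    rw [hlam m]
    have key : ∀ t : ℝ, 0 < t → t ≤ 1 → ⟪lam m + r m • d, w⟫ ≤ t * (r m / 2 * ‖w‖ ^ 2) := by
      intro t ht ht1
      have hyt : Yv + t • w ∈ K := by
        have h' := hKconv ((hargmin m).1) hyy (by linarith : (0:ℝ) ≤ 1 - t) ht.le (by ring)
        have : (1 - t) • Yv + t • yy = Yv + t • w := by
          rw [hw, sub_smul, one_smul, smul_sub]; abel
        rwa [this] at h'
      have harg := (hargmin m).2 X (Yv + t • w) hyt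
      simp only [auglagr] at harg
      have he1 : g X - (Yv + t • w) = d - t • w := by rw [hdd]; abel
      rw [he1] at harg
      have he2 : ⟪lam m, d - t • w⟫ = ⟪lam m, d⟫ - t * ⟪lam m, w⟫ := by
        rw [inner_sub_right, real_inner_smul_right]
      have he3 : ‖d - t • w‖ ^ 2 = ‖d‖ ^ 2 - 2 * (t * ⟪d, w⟫) + t ^ 2 * ‖w‖ ^ 2 := by
        rw [norm_sub_sq_real, real_inner_smul_right, norm_smul]
        rw [Real.norm_eq_abs, abs_of_pos ht, mul_pow]
      rw [he2, he3] at harg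
      have h4 : t * ⟪lam m + r m • d, w⟫ ≤ t * (t * (r m / 2 * ‖w‖ ^ 2)) := by
        rw [inner_add_left, real_inner_smul_left]
        nlinarith [harg]
      exact le_of_mul_le_mul_left (by linarith [h4]) ht
    exact aux_le_zero one_pos key
  -- convexity of x ↦ ⟪λᵏ, g x⟫ from graph convexity
  have hGcv : ∀ k, 1 ≤ k → ∀ x₀ x₁ : EuclideanSpace ℝ (Fin n), ∀ t : ℝ, 0 ≤ t → t ≤ 1 →
      ⟪lam k, g ((1 - t) • x₀ + t • x₁)⟫ ≤
        (1 - t) * ⟪lam k, g x₀⟫ + t * ⟪lam k, g x₁⟫ := by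
    intro k hk x₀ x₁ t ht ht1
    have h₀ : ((x₀, y k - g x₀) : EuclideanSpace ℝ (Fin n) × Y) ∈ gphGK g K := by
      show g x₀ + (y k - g x₀) ∈ K
      rw [show g x₀ + (y k - g x₀) = y k by abel]
      exact hyK k hk
    have h₁ : ((x₁, y k - g x₁) : EuclideanSpace ℝ (Fin n) × Y) ∈ gphGK g K := by
      show g x₁ + (y k - g x₁) ∈ K
      rw [show g x₁ + (y k - g x₁) = y k by abel]
      exact hyK k hk
    have hcomb := hgraph h₀ h₁ (by linarith : (0:ℝ) ≤ 1 - t) ht (by ring)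
    have hz : g ((1 - t) • x₀ + t • x₁) +
        ((1 - t) • (y k - g x₀) + t • (y k - g x₁)) ∈ K := hcomb
    have hNC' := hNC k hk _ hz
    have he : (g ((1 - t) • x₀ + t • x₁) +
        ((1 - t) • (y k - g x₀) + t • (y k - g x₁))) - y k
        = g ((1 - t) • x₀ + t • x₁) - ((1 - t) • g x₀ + t • g x₁) := by
      module
    rw [he] at hNC'
    rw [inner_sub_right, inner_add_right, real_inner_smul_right, real_inner_smul_right] at hNC'
    linarith
  -- exact minimization of the ordinary Lagrangian
  have hlagrmin : ∀ k, 1 ≤ k → ∀ x' y', y' ∈ K →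
      lagr f g (x k) (y k) (lam k) ≤ lagr f g x' y' (lam k) := by
    intro k hk x' y' hy'
    obtain ⟨m, rfl⟩ : ∃ m, k = m + 1 := ⟨k - 1, by omega⟩
    set X := x (m + 1) with hX
    set Yv := y (m + 1) with hYv
    set Λ := lam (m + 1) with hΛ
    set d := g X - Yv with hdd
    set ρ := r m with hρ
    have hLam : Λ = lam m + ρ • d := hlam m
    have hident : ∀ (a : EuclideanSpace ℝ (Fin n)) (b : Y),
        auglagr f g ρ a b (lam m) =
          lagr f g a b Λ + ρ / 2 * ‖(g a - b) - d‖ ^ 2 - ρ / 2 * ‖d‖ ^ 2 := by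
      intro a b
      have h := aux_ident (lam m) d (g a - b) ρ
      simp only [auglagr, lagr, hLam]
      linarith [h]
    -- local Lipschitz bound for g near X
    have hgc : ContDiffAt ℝ 1 g X := hg.contDiffAt.of_le (by simp)
    obtain ⟨C, t0, ht0, hlip⟩ := hgc.exists_lipschitzOnWith
    obtain ⟨δ, hδpos, hball⟩ := Metric.mem_nhds_iff.mp ht0
    set M₁ : ℝ := (C : ℝ) * ‖x' - X‖ + ‖Yv - y'‖ with hM₁
    have hM₁nn : 0 ≤ M₁ := by positivity
    have key : ∀ t : ℝ, 0 < t → t ≤ min 1 (δ / (2 * (‖x' - X‖ + 1))) →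
        lagr f g X Yv Λ - lagr f g x' y' Λ ≤ t * (ρ / 2 * M₁ ^ 2) := by
      intro t ht htle
      have ht1 : t ≤ 1 := le_trans htle (min_le_left _ _)
      have htδ : t ≤ δ / (2 * (‖x' - X‖ + 1)) := le_trans htle (min_le_right _ _)
      set xt := (1 - t) • X + t • x' with hxt
      set yt := (1 - t) • Yv + t • y' with hyt
      have hytK : yt ∈ K := hKconv (hyK (m+1) (by omega)) hy'
        (by linarith : (0:ℝ) ≤ 1 - t) ht.le (by ring)
      have harg := (hargmin m).2 xt yt hytK
      rw [hident X Yv, hident xt yt] at harg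
      have hd0 : (g X - Yv) - d = 0 := by rw [hdd]; abel
      rw [hd0] at harg
      simp only [norm_zero] at harg
      -- bound on the quadratic remainder
      have hxtX : xt - X = t • (x' - X) := by rw [hxt, sub_smul, one_smul, smul_sub]; abel
      have hdistxt : dist xt X < δ := by
        rw [dist_eq_norm, hxtX, norm_smul, Real.norm_eq_abs, abs_of_pos ht]
        have h1 : t * ‖x' - X‖ ≤ (δ / (2 * (‖x' - X‖ + 1))) * ‖x' - X‖ :=
          mul_le_mul_of_nonneg_right htδ (norm_nonneg _)
        have h2 : (δ / (2 * (‖x' - X‖ + 1))) * ‖x' - X‖ < δ := by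
          rw [div_mul_eq_mul_div, div_lt_iff₀ (by positivity)]
          nlinarith [norm_nonneg (x' - X)]
        linarith
      have hXmem : X ∈ t0 := hball (Metric.mem_ball_self hδpos)
      have hxtmem : xt ∈ t0 := hball hdistxt
      have hgLip : ‖g xt - g X‖ ≤ (C : ℝ) * (t * ‖x' - X‖) := by
        have := hlip.dist_le_mul xt hxtmem X hXmem
        rw [dist_eq_norm, dist_eq_norm, hxtX] at this
        rw [norm_smul, Real.norm_eq_abs, abs_of_pos ht] at this
        exact this
      have hrem : ‖(g xt - yt) - d‖ ≤ t * M₁ := by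
        have he : (g xt - yt) - d = (g xt - g X) + t • (Yv - y') := by
          rw [hyt, hdd, sub_smul, one_smul, smul_sub]; abel
        rw [he]
        calc ‖(g xt - g X) + t • (Yv - y')‖ ≤ ‖g xt - g X‖ + ‖t • (Yv - y')‖ :=
              norm_add_le _ _
          _ ≤ (C : ℝ) * (t * ‖x' - X‖) + t * ‖Yv - y'‖ := by
              rw [norm_smul, Real.norm_eq_abs, abs_of_pos ht]
              exact add_le_add hgLip le_rfl
          _ = t * M₁ := by rw [hM₁]; ring
      have hremsq : ‖(g xt - yt) - d‖ ^ 2 ≤ t ^ 2 * M₁ ^ 2 := by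
        have := pow_le_pow_left₀ (norm_nonneg _) hrem 2
        calc ‖(g xt - yt) - d‖ ^ 2 ≤ (t * M₁) ^ 2 := this
          _ = t ^ 2 * M₁ ^ 2 := by ring
      -- convexity bounds
      have hB1 : f xt ≤ (1 - t) * f X + t * f x' :=
        hfconv.2 (Set.mem_univ X) (Set.mem_univ x') (by linarith) ht.le (by ring)
      have hB2 : ⟪Λ, g xt⟫ ≤ (1 - t) * ⟪Λ, g X⟫ + t * ⟪Λ, g x'⟫ :=
        hGcv (m+1) (by omega) X x' t ht.le ht1
      have hB3 : ⟪Λ, yt⟫ = (1 - t) * ⟪Λ, Yv⟫ + t * ⟪Λ, y'⟫ := by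
        rw [hyt, inner_add_right, real_inner_smul_right, real_inner_smul_right]
      have hlagr_xt : lagr f g xt yt Λ ≤
          (1 - t) * lagr f g X Yv Λ + t * lagr f g x' y' Λ := by
        simp only [lagr, inner_sub_right]
        linarith [hB1, hB2, hB3.le, hB3.ge]
      have hρnn : (0:ℝ) ≤ ρ := hrpos m
      have hball2 : ρ / 2 * ‖(g xt - yt) - d‖ ^ 2 ≤ ρ / 2 * (t ^ 2 * M₁ ^ 2) :=
        mul_le_mul_of_nonneg_left hremsq (by positivity)
      have hfinal : t * (lagr f g X Yv Λ - lagr f g x' y' Λ) ≤ t * (t * (ρ / 2 * M₁ ^ 2)) := by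
        nlinarith [harg, hlagr_xt, hball2]
      exact le_of_mul_le_mul_left hfinal ht
    have := aux_le_zero (lt_min one_pos (by positivity)) key
    linarith
  -- lower bound on the merit values via the dual solution
  have hdual : ∃ B : ℝ, ∀ k, 1 ≤ k →
      B ≤ - lagr f g (x k) (y k) (lam k) - ⟪sbar, lam k⟫ := by
    obtain ⟨lb, hlb⟩ := hSolne
    have hθk : ∀ k, 1 ≤ k → dualFn f g K (lam k) =
        ((- lagr f g (x k) (y k) (lam k) : ℝ) : EReal) := by
      intro k hk
      have h1 : sInf ((fun p : EuclideanSpace ℝ (Fin n) × Y =>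
          ((lagr f g p.1 p.2 (lam k) : ℝ) : EReal)) '' {p | p.2 ∈ K}) =
          ((lagr f g (x k) (y k) (lam k) : ℝ) : EReal) := by
        apply le_antisymm
        · exact sInf_le ⟨(x k, y k), hyK k hk, rfl⟩
        · apply le_sInf
          rintro z ⟨⟨a, b⟩, hbK, rfl⟩
          exact EReal.coe_le_coe_iff.mpr (hlagrmin k hk a b hbK)
      show - sInf _ = _
      rw [h1, ← EReal.coe_neg]
    have hbot : dualFn f g K lb ≠ ⊥ := by
      show ¬ (- sInf _ = ⊥)
      rw [EReal.neg_eq_bot_iff]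
      intro htop
      have hle : sInf ((fun p : EuclideanSpace ℝ (Fin n) × Y =>
          ((lagr f g p.1 p.2 lb : ℝ) : EReal)) '' {p | p.2 ∈ K}) ≤
          ((lagr f g (x 1) (y 1) lb : ℝ) : EReal) :=
        sInf_le ⟨(x 1, y 1), hyK 1 le_rfl, rfl⟩
      rw [htop] at hle
      exact (EReal.coe_ne_top _) (top_le_iff.mp hle)
    have htop : dualFn f g K lb ≠ ⊤ := by
      intro h
      have h2 := hlb (lam 1)
      rw [hθk 1 le_rfl, h] at h2
      have hrhs : (⟪sbar, lb⟫ : EReal) - ⊤ = ⊥ := by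
        rw [sub_eq_add_neg]
        simp
      rw [hrhs] at h2
      have : (⟪sbar, lam 1⟫ : EReal) -
          ((- lagr f g (x 1) (y 1) (lam 1) : ℝ) : EReal) =
          ((⟪sbar, lam 1⟫ - (- lagr f g (x 1) (y 1) (lam 1)) : ℝ) : EReal) := by
        rw [EReal.coe_sub]
      rw [this] at h2
      exact (EReal.coe_ne_bot _) (le_bot_iff.mp h2)
    set c := (dualFn f g K lb).toReal with hc'
    have hc : dualFn f g K lb = (c : EReal) := (EReal.coe_toReal htop hbot).symm
    refine ⟨-(⟪sbar, lb⟫ - c), ?_⟩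
    intro k hk
    have h2 := hlb (lam k)
    rw [hθk k hk, hc, ← EReal.coe_sub, ← EReal.coe_sub] at h2
    have h3 := EReal.coe_le_coe_iff.mp h2
    linarith
  -- the descent inequality
  have hdescent : ∀ k, 1 ≤ k →
      (- lagr f g (x (k+1)) (y (k+1)) (lam (k+1)) - ⟪sbar, lam (k+1)⟫)
        + r k / 2 * ‖(g (x (k+1)) - y (k+1)) + sbar‖ ^ 2
      ≤ - lagr f g (x k) (y k) (lam k) - ⟪sbar, lam k⟫ := by
    intro k hk
    have hL := hlagrmin k hk (x (k+1)) (y (k+1)) (hyK (k+1) (by omega))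
    have hn := hnormge (k+1) (by omega)
    have hr := hrpos k
    have hnsq : ‖sbar‖ ^ 2 ≤ ‖g (x (k+1)) - y (k+1)‖ ^ 2 :=
      pow_le_pow_left₀ (norm_nonneg _) hn 2
    have e1 : lagr f g (x (k+1)) (y (k+1)) (lam (k+1)) =
        lagr f g (x (k+1)) (y (k+1)) (lam k) + r k * ‖g (x (k+1)) - y (k+1)‖ ^ 2 := by
      simp only [lagr, hlam k, inner_add_left, real_inner_smul_left,
        real_inner_self_eq_norm_sq]
      ring
    have e2 : ⟪sbar, lam (k+1)⟫ =
        ⟪sbar, lam k⟫ + r k * ⟪sbar, g (x (k+1)) - y (k+1)⟫ := by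
      rw [hlam k, inner_add_right, real_inner_smul_right]
    have e3 : ‖(g (x (k+1)) - y (k+1)) + sbar‖ ^ 2 =
        ‖g (x (k+1)) - y (k+1)‖ ^ 2 + 2 * ⟪g (x (k+1)) - y (k+1), sbar⟫ + ‖sbar‖ ^ 2 :=
      norm_add_sq_real _ _
    have e4 : ⟪g (x (k+1)) - y (k+1), sbar⟫ = ⟪sbar, g (x (k+1)) - y (k+1)⟫ :=
      real_inner_comm _ _
    rw [e1, e2, e3, e4]
    nlinarith [mul_le_mul_of_nonneg_left hnsq hr]
  -- summability and convergence of the residuals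
  obtain ⟨B, hB⟩ := hdual
  set En : ℕ → ℝ := fun k => - lagr f g (x k) (y k) (lam k) - ⟪sbar, lam k⟫ with hEn
  have hEd : ∀ j : ℕ, rlow / 2 * ‖(g (x (j+2)) - y (j+2)) + sbar‖ ^ 2 ≤ En (j+1) - En (j+2) := by
    intro j
    have h1 := hdescent (j+1) (by omega)
    have h2 : rlow / 2 * ‖(g (x (j+2)) - y (j+2)) + sbar‖ ^ 2 ≤
        r (j+1) / 2 * ‖(g (x (j+2)) - y (j+2)) + sbar‖ ^ 2 := by
      apply mul_le_mul_of_nonneg_right _ (by positivity)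
      linarith [hrlow (j+1)]
    have h3 : En (j+2) + r (j+1) / 2 * ‖(g (x (j+2)) - y (j+2)) + sbar‖ ^ 2 ≤ En (j+1) := h1
    linarith
  have hsummable : Summable (fun j : ℕ => rlow / 2 * ‖(g (x (j+2)) - y (j+2)) + sbar‖ ^ 2) := by
    apply summable_of_sum_range_le (c := En 1 - B) (fun n => by positivity)
    intro m
    have htel : ∑ j ∈ Finset.range m, (En (j+1) - En (j+2)) = En 1 - En (m+1) := by
      have := Finset.sum_range_sub' (fun i => En (i+1)) m
      simpa using this
    calc ∑ j ∈ Finset.range m, rlow / 2 * ‖(g (x (j+2)) - y (j+2)) + sbar‖ ^ 2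
        ≤ ∑ j ∈ Finset.range m, (En (j+1) - En (j+2)) := Finset.sum_le_sum (fun j _ => hEd j)
      _ = En 1 - En (m+1) := htel
      _ ≤ En 1 - B := by
          have hBm : B ≤ En (m+1) := hB (m+1) (by omega)
          linarith
  have h0 := hsummable.tendsto_atTop_zero
  have h1 : Tendsto (fun j : ℕ => ‖(g (x (j+2)) - y (j+2)) + sbar‖ ^ 2) atTop (𝓝 0) := by
    have h := h0.const_mul (2 / rlow)
    rw [mul_zero] at h
    have heq : ∀ j : ℕ, (2 / rlow) * (rlow / 2 * ‖(g (x (j+2)) - y (j+2)) + sbar‖ ^ 2) =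
        ‖(g (x (j+2)) - y (j+2)) + sbar‖ ^ 2 := by
      intro j; field_simp
    simpa only [heq] using h
  have h2 : Tendsto (fun j : ℕ => ‖(g (x (j+2)) - y (j+2)) + sbar‖) atTop (𝓝 0) := by
    have h := (Real.continuous_sqrt.tendsto 0).comp h1
    have heq : (fun j : ℕ => Real.sqrt (‖(g (x (j+2)) - y (j+2)) + sbar‖ ^ 2)) =
        (fun j : ℕ => ‖(g (x (j+2)) - y (j+2)) + sbar‖) :=
      funext fun j => Real.sqrt_sq (norm_nonneg _)
    rw [Function.comp_def, heq] at h
    simpa using h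
  have hdten : Tendsto (fun j : ℕ => g (x (j+2)) - y (j+2)) atTop (𝓝 (-sbar)) := by
    rw [tendsto_iff_norm_sub_tendsto_zero]
    have heq : (fun j : ℕ => ‖(g (x (j+2)) - y (j+2)) - (-sbar)‖) =
        (fun j : ℕ => ‖(g (x (j+2)) - y (j+2)) + sbar‖) := by
      funext j; rw [sub_neg_eq_add]
    rw [heq]
    exact h2
  -- eventual projection bound
  have hproj_ev : ∀ᶠ k in atTop, ∃ ytilde : Y,
      (ytilde ∈ K ∧ ∀ y' ∈ K, ‖g (x k) - ytilde‖ ≤ ‖g (x k) - y'‖) ∧ ‖ytilde - y k‖ ≤ ε := by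
    have hnorm2 : Tendsto (fun j : ℕ => ‖g (x (j+2)) - y (j+2)‖ ^ 2) atTop (𝓝 (‖sbar‖ ^ 2)) := by
      have h := hdten.norm
      rw [norm_neg] at h
      exact h.pow 2
    have hev : ∀ᶠ j : ℕ in atTop, ‖g (x (j+2)) - y (j+2)‖ ^ 2 < ‖sbar‖ ^ 2 + ε ^ 2 :=
      hnorm2.eventually_lt_const (by nlinarith)
    obtain ⟨J, hJ⟩ := eventually_atTop.mp hev
    refine eventually_atTop.mpr ⟨J + 2, fun k hk => ?_⟩
    have hk2 : 2 ≤ k := by omega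
    have hksq : ‖g (x k) - y k‖ ^ 2 < ‖sbar‖ ^ 2 + ε ^ 2 := by
      have := hJ (k - 2) (by omega)
      rwa [show k - 2 + 2 = k by omega] at this
    set z := g (x k) with hz
    obtain ⟨yt, hytK, hytd⟩ := hKclosed.exists_infDist_eq_dist hKne z
    have hminy : ∀ y' ∈ K, ‖z - yt‖ ≤ ‖z - y'‖ := by
      intro y' hy'
      rw [← dist_eq_norm, ← dist_eq_norm, ← hytd]
      exact Metric.infDist_le_dist_of_mem hy'
    have hyKk : y k ∈ K := hyK k (by omega)
    -- projection inequality
    have hip : ⟪z - yt, y k - yt⟫ ≤ 0 := by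
      have key : ∀ t : ℝ, 0 < t → t ≤ 1 →
          ⟪z - yt, y k - yt⟫ ≤ t * (‖y k - yt‖ ^ 2 / 2) := by
        intro t ht ht1
        have hyt2 : yt + t • (y k - yt) ∈ K := by
          have h' := hKconv hytK hyKk (by linarith : (0:ℝ) ≤ 1 - t) ht.le (by ring)
          have : (1 - t) • yt + t • y k = yt + t • (y k - yt) := by
            rw [sub_smul, one_smul, smul_sub]; abel
          rwa [this] at h'
        have hle := hminy _ hyt2
        have hle2 : ‖z - yt‖ ^ 2 ≤ ‖z - (yt + t • (y k - yt))‖ ^ 2 :=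
          pow_le_pow_left₀ (norm_nonneg _) hle 2
        have he : z - (yt + t • (y k - yt)) = (z - yt) - t • (y k - yt) := by abel
        have hexp : ‖(z - yt) - t • (y k - yt)‖ ^ 2 =
            ‖z - yt‖ ^ 2 - 2 * (t * ⟪z - yt, y k - yt⟫) + t ^ 2 * ‖y k - yt‖ ^ 2 := by
          rw [norm_sub_sq_real, real_inner_smul_right, norm_smul,
            Real.norm_eq_abs, abs_of_pos ht, mul_pow]
        rw [he, hexp] at hle2
        have h4 : t * ⟪z - yt, y k - yt⟫ ≤ t * (t * (‖y k - yt‖ ^ 2 / 2)) := by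
          nlinarith [hle2]
        exact le_of_mul_le_mul_left h4 ht
      exact aux_le_zero one_pos key
    have hSyt : ‖sbar‖ ≤ ‖z - yt‖ := by
      have := hsbarmin _ (hmemS (x k) yt hytK)
      rwa [norm_sub_rev] at this
    have hbound : ‖yt - y k‖ ^ 2 ≤ ε ^ 2 := by
      have he : z - y k = (z - yt) - (y k - yt) := by abel
      have hexp : ‖(z - yt) - (y k - yt)‖ ^ 2 =
          ‖z - yt‖ ^ 2 - 2 * ⟪z - yt, y k - yt⟫ + ‖y k - yt‖ ^ 2 := norm_sub_sq_real _ _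
      have hd : ‖z - y k‖ ^ 2 =
          ‖z - yt‖ ^ 2 - 2 * ⟪z - yt, y k - yt⟫ + ‖y k - yt‖ ^ 2 := by rw [he, hexp]
      have hnyk : ‖yt - y k‖ = ‖y k - yt‖ := norm_sub_rev _ _
      rw [hnyk]
      nlinarith [hksq, hSyt, hip, hd, norm_nonneg (z - yt), norm_nonneg (y k - yt),
        pow_le_pow_left₀ (norm_nonneg sbar) hSyt 2]
    exact ⟨yt, ⟨hytK, hminy⟩, aux_sq_le (norm_nonneg _) hε.le hbound⟩
  -- the cluster point
  obtain ⟨p, hp⟩ := homega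
  have hfreq : ∀ U ∈ 𝓝 p, ∃ᶠ k in atTop, (x k, y k) ∈ U := mapClusterPt_iff_frequently.mp hp
  have hpK : p.2 ∈ K := by
    rw [← hKclosed.closure_eq]
    rw [mem_closure_iff_nhds]
    intro U hU
    have hV : (Prod.snd ⁻¹' U : Set (EuclideanSpace ℝ (Fin n) × Y)) ∈ 𝓝 p :=
      continuous_snd.continuousAt.preimage_mem_nhds hU
    have := (hfreq _ hV).and_eventually (eventually_ge_atTop 1)
    obtain ⟨k, hkU, hk1⟩ := this.exists
    exact ⟨y k, hkU, hyK k hk1⟩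
  have hplim : g p.1 - p.2 = -sbar := by
    have hGcont : Continuous (fun q : EuclideanSpace ℝ (Fin n) × Y => g q.1 - q.2) :=
      (hg.continuous.comp continuous_fst).sub continuous_snd
    by_contra hne
    set v := (g p.1 - p.2) + sbar with hv
    have hvne : v ≠ 0 := by
      intro h
      apply hne
      have : g p.1 - p.2 = -sbar := by
        rw [← sub_eq_zero]; rw [sub_neg_eq_add]; exact h
      exact this
    have hvpos : 0 < ‖v‖ := norm_pos_iff.mpr hvne
    set δ := ‖v‖ / 2 with hδ
    have hδpos : 0 < δ := by positivity
    have hU : {q : EuclideanSpace ℝ (Fin n) × Y |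
        dist (g q.1 - q.2) (g p.1 - p.2) < δ} ∈ 𝓝 p := by
      have hc : ContinuousAt (fun q : EuclideanSpace ℝ (Fin n) × Y => g q.1 - q.2) p :=
        hGcont.continuousAt
      exact hc.preimage_mem_nhds (Metric.ball_mem_nhds _ hδpos)
    have hev : ∀ᶠ k : ℕ in atTop, ‖(g (x k) - y k) + sbar‖ < δ := by
      obtain ⟨J, hJ⟩ := Metric.tendsto_atTop.mp h2 δ hδpos
      refine eventually_atTop.mpr ⟨J + 2, fun k hk => ?_⟩
      have hthis := hJ (k - 2) (by omega)
      rw [show k - 2 + 2 = k by omega] at hthis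
      rw [Real.dist_eq, sub_zero, abs_of_nonneg (norm_nonneg _)] at hthis
      exact hthis
    obtain ⟨k, hkU, hkev⟩ := ((hfreq _ hU).and_eventually hev).exists
    have : ‖v‖ < 2 * δ := by
      have htri : ‖v‖ ≤ ‖(g p.1 - p.2) - (g (x k) - y k)‖ + ‖(g (x k) - y k) + sbar‖ := by
        have hveq : v = ((g p.1 - p.2) - (g (x k) - y k)) + ((g (x k) - y k) + sbar) := by
          rw [hv]; abel
        rw [hveq]
        exact norm_add_le _ _
      have h1 : ‖(g p.1 - p.2) - (g (x k) - y k)‖ < δ := by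
        rw [norm_sub_rev, ← dist_eq_norm]
        exact hkU
      linarith
    rw [hδ] at this
    linarith
  -- vanishing of the adjoint at the cluster point
  have hdiffg : Differentiable ℝ g := hg.differentiable (by simp)
  have hadj : ContinuousLinearMap.adjoint (fderiv ℝ g p.1) (g p.1 - p.2) = 0 := by
    have key : ∀ v : EuclideanSpace ℝ (Fin n),
        ⟪g p.1 - p.2, (fderiv ℝ g p.1) v⟫ = 0 := by
      intro v
      have hline : HasDerivAt (fun t : ℝ => p.1 + t • v) v 0 := by
        have h := ((hasDerivAt_id (0:ℝ)).smul_const v).const_add p.1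
        simpa using h
      have hfd : HasFDerivAt g (fderiv ℝ g p.1) (p.1 + (0:ℝ) • v) := by
        simpa using (hdiffg p.1).hasFDerivAt
      have hgd : HasDerivAt (fun t : ℝ => g (p.1 + t • v)) ((fderiv ℝ g p.1) v) 0 :=
        hfd.comp_hasDerivAt 0 hline
      have hc : HasDerivAt (fun t : ℝ => g (p.1 + t • v) - p.2) ((fderiv ℝ g p.1) v) 0 :=
        hgd.sub_const p.2
      have hψ := hc.inner ℝ hc
      simp only [zero_smul, add_zero] at hψ
      have hmin : IsLocalMin (fun t : ℝ => ⟪g (p.1 + t • v) - p.2, g (p.1 + t • v) - p.2⟫) 0 := by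
        apply Filter.Eventually.of_forall
        intro t
        have hS : ‖sbar‖ ≤ ‖g (p.1 + t • v) - p.2‖ := by
          have := hsbarmin _ (hmemS (p.1 + t • v) p.2 hpK)
          rwa [norm_sub_rev] at this
        have h0 : ‖g (p.1 + (0:ℝ) • v) - p.2‖ = ‖sbar‖ := by
          simp only [zero_smul, add_zero]
          rw [hplim, norm_neg]
        show ⟪g (p.1 + (0:ℝ) • v) - p.2, g (p.1 + (0:ℝ) • v) - p.2⟫ ≤
            ⟪g (p.1 + t • v) - p.2, g (p.1 + t • v) - p.2⟫
        rw [real_inner_self_eq_norm_sq, real_inner_self_eq_norm_sq, h0]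
        exact pow_le_pow_left₀ (norm_nonneg _) hS 2
      have hz := hmin.hasDerivAt_eq_zero hψ
      have hcomm : ⟪(fderiv ℝ g p.1) v, g p.1 - p.2⟫ =
          ⟪g p.1 - p.2, (fderiv ℝ g p.1) v⟫ := real_inner_comm _ _
      rw [hcomm] at hz
      linarith
    have hall : ∀ v, ⟪ContinuousLinearMap.adjoint (fderiv ℝ g p.1) (g p.1 - p.2), v⟫ = 0 := by
      intro v
      rw [ContinuousLinearMap.adjoint_inner_left]
      exact key v
    have h0 := hall (ContinuousLinearMap.adjoint (fderiv ℝ g p.1) (g p.1 - p.2))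
    rwa [inner_self_eq_zero] at h0
  -- continuity of the adjoint residual
  have hcont : Continuous (fun q : EuclideanSpace ℝ (Fin n) × Y =>
      ‖ContinuousLinearMap.adjoint (fderiv ℝ g q.1) (g q.1 - q.2)‖) := by
    have c1 : Continuous (fun q : EuclideanSpace ℝ (Fin n) × Y =>
        (ContinuousLinearMap.adjoint (fderiv ℝ g q.1), g q.1 - q.2)) := by
      apply Continuous.prodMk
      · exact (ContinuousLinearMap.adjoint.toContinuousLinearEquiv.continuous).comp
          ((hg.continuous_fderiv (by simp)).comp continuous_fst)
      · exact (hg.continuous.comp continuous_fst).sub continuous_snd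
    exact (isBoundedBilinearMap_apply.continuous.comp c1).norm
  -- assembling the frequently set
  have hUmem : {q : EuclideanSpace ℝ (Fin n) × Y |
      ‖ContinuousLinearMap.adjoint (fderiv ℝ g q.1) (g q.1 - q.2)‖ < ε} ∈ 𝓝 p := by
    have hopen : IsOpen {q : EuclideanSpace ℝ (Fin n) × Y |
        ‖ContinuousLinearMap.adjoint (fderiv ℝ g q.1) (g q.1 - q.2)‖ < ε} :=
      isOpen_lt hcont continuous_const
    apply hopen.mem_nhds
    show ‖ContinuousLinearMap.adjoint (fderiv ℝ g p.1) (g p.1 - p.2)‖ < ε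
    rw [hadj, norm_zero]
    exact hε
  have hargmin' : ∀ k, 1 ≤ k → (y k ∈ K ∧ ∀ x' y', y' ∈ K →
      auglagr f g (r (k-1)) (x k) (y k) (lam (k-1)) ≤
        auglagr f g (r (k-1)) x' y' (lam (k-1))) := by
    intro k hk
    obtain ⟨m, rfl⟩ : ∃ m, k = m + 1 := ⟨k - 1, by omega⟩
    simpa using hargmin m
  have hfin : ∃ᶠ k in atTop, (1 ≤ k ∧
      (y k ∈ K ∧ ∀ x' y', y' ∈ K →
        auglagr f g (r (k - 1)) (x k) (y k) (lam (k - 1)) ≤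
          auglagr f g (r (k - 1)) x' y' (lam (k - 1))) ∧
      ‖ContinuousLinearMap.adjoint (fderiv ℝ g (x k)) (g (x k) - y k)‖ ≤ ε ∧
      ∃ ytilde : Y, (ytilde ∈ K ∧ ∀ y' ∈ K, ‖g (x k) - ytilde‖ ≤ ‖g (x k) - y'‖) ∧
        ‖ytilde - y k‖ ≤ ε) := by
    have hev : ∀ᶠ k : ℕ in atTop, (1 ≤ k ∧ ∃ ytilde : Y,
        (ytilde ∈ K ∧ ∀ y' ∈ K, ‖g (x k) - ytilde‖ ≤ ‖g (x k) - y'‖) ∧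
        ‖ytilde - y k‖ ≤ ε) := (eventually_ge_atTop 1).and hproj_ev
    refine ((hfreq _ hUmem).and_eventually hev).mono ?_
    rintro k ⟨hU, hk1, hproj⟩
    exact ⟨hk1, hargmin' k hk1, le_of_lt hU, hproj⟩
  refine ⟨{k | 1 ≤ k ∧
      (y k ∈ K ∧ ∀ x' y', y' ∈ K →
        auglagr f g (r (k - 1)) (x k) (y k) (lam (k - 1)) ≤
          auglagr f g (r (k - 1)) x' y' (lam (k - 1))) ∧
      ‖ContinuousLinearMap.adjoint (fderiv ℝ g (x k)) (g (x k) - y k)‖ ≤ ε ∧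
      ∃ ytilde : Y, (ytilde ∈ K ∧ ∀ y' ∈ K, ‖g (x k) - ytilde‖ ≤ ‖g (x k) - y'‖) ∧
        ‖ytilde - y k‖ ≤ ε}, Nat.frequently_atTop_iff_infinite.mp hfin, fun k hk => hk⟩
end
end
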